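/- arXiv:2303.00252 — 9 statements merged into one kernel-verified Lean document; each statement's English description precedes it below -/
import Mathlib

section
/- Let n ≥ 1 and 1 ≤ q ≤ n be integers and let G be a q-colorable simple graph on vertex set {1,…,n}. Let A be the n×n real symmetric matrix with A_{ii} = 0 for all i, A_{ij} = −1 if {i,j} is an edge of G, and A_{ij} = +1 if i ≠ j and {i,j} is not an edge of G. Then for every integer m ≥ 1, trace(A^{2m}) ≥ (n/q − 1)^{2m}. -/
/-!
Take a largest colour class `S` of a `q`-colouring, so `#S ≥ n / q`. On `S` the matrix `A` is
`J - I`, so the indicator vector of `S` has Rayleigh quotient `#S - 1` and the largest eigenvalue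
`λ` of `A` is at least `#S - 1 ≥ n / q - 1 ≥ 0`. Since `trace (A ^ (2 * m))` is the sum of the
`2m`-th powers of the eigenvalues, it is at least `λ ^ (2 * m)`.
-/

open Matrix Finset Unitary

namespace Matrix.IsHermitian

variable {𝕜 n : Type*} [RCLike 𝕜] [Fintype n] [DecidableEq n] {A : Matrix n n 𝕜}

theorem trace_pow_eq_sum_eigenvalues_pow (hA : A.IsHermitian) (k : ℕ) :
    (A ^ k).trace = ∑ i, (hA.eigenvalues i : 𝕜) ^ k := by
  conv_lhs => rw [hA.spectral_theorem, ← map_pow, conjStarAlgAut_apply, trace_mul_cycle,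
    Unitary.coe_star_mul_self, one_mul, diagonal_pow, trace_diagonal]
  simp

private lemma star_star_eigenvectorUnitary_mulVec (hA : A.IsHermitian) (v : n → 𝕜) :
    star (star (hA.eigenvectorUnitary : Matrix n n 𝕜) *ᵥ v) =
      star v ᵥ* hA.eigenvectorUnitary := by
  simp [star_mulVec, star_eq_conjTranspose]

theorem star_dotProduct_mulVec_eq_sum (hA : A.IsHermitian) (v : n → 𝕜) :
    star v ⬝ᵥ A *ᵥ v = ∑ i, ((hA.eigenvalues i *
      ‖(star (hA.eigenvectorUnitary : Matrix n n 𝕜) *ᵥ v) i‖ ^ 2 : ℝ) : 𝕜) := by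
  conv_lhs => rw [hA.spectral_theorem, conjStarAlgAut_apply]
  rw [← mulVec_mulVec, ← mulVec_mulVec, dotProduct_mulVec,
    ← star_star_eigenvectorUnitary_mulVec]
  simp only [dotProduct, mulVec_diagonal, Function.comp_apply, Pi.star_apply]
  refine sum_congr rfl fun i _ => ?_
  push_cast
  rw [← RCLike.conj_mul, RCLike.star_def]
  ring

theorem star_dotProduct_self_eq_sum (hA : A.IsHermitian) (v : n → 𝕜) :
    star v ⬝ᵥ v =
      ∑ i, ((‖(star (hA.eigenvectorUnitary : Matrix n n 𝕜) *ᵥ v) i‖ ^ 2 : ℝ) : 𝕜) := by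
  have hU : star v ⬝ᵥ v = star (star (hA.eigenvectorUnitary : Matrix n n 𝕜) *ᵥ v) ⬝ᵥ
      star (hA.eigenvectorUnitary : Matrix n n 𝕜) *ᵥ v := by
    rw [star_star_eigenvectorUnitary_mulVec, ← dotProduct_mulVec, mulVec_mulVec, ← coe_star,
      Unitary.coe_mul_star_self, one_mulVec]
  rw [hU]
  refine sum_congr rfl fun i _ => ?_
  push_cast
  rw [← RCLike.conj_mul]
  rfl

theorem exists_re_star_dotProduct_mulVec_le [Nonempty n] (hA : A.IsHermitian) (v : n → 𝕜) :
    ∃ i, RCLike.re (star v ⬝ᵥ A *ᵥ v) ≤ hA.eigenvalues i * RCLike.re (star v ⬝ᵥ v) := by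
  obtain ⟨i, -, hi⟩ := exists_max_image univ hA.eigenvalues univ_nonempty
  refine ⟨i, ?_⟩
  simp only [hA.star_dotProduct_mulVec_eq_sum, hA.star_dotProduct_self_eq_sum, map_sum,
    RCLike.ofReal_re, mul_sum]
  exact sum_le_sum fun j _ => mul_le_mul_of_nonneg_right (hi j (mem_univ j)) (by positivity)

theorem pow_le_re_trace_pow_of_le_rayleigh [Nonempty n] (hA : A.IsHermitian) {v : n → 𝕜}
    (hv : 0 < RCLike.re (star v ⬝ᵥ v)) {r : ℝ} (hr : 0 ≤ r)
    (hrv : r * RCLike.re (star v ⬝ᵥ v) ≤ RCLike.re (star v ⬝ᵥ A *ᵥ v)) (m : ℕ) :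
    r ^ (2 * m) ≤ RCLike.re (A ^ (2 * m)).trace := by
  obtain ⟨i, hi⟩ := hA.exists_re_star_dotProduct_mulVec_le v
  have hr_le : r ≤ hA.eigenvalues i := le_of_mul_le_mul_right (hrv.trans hi) hv
  calc r ^ (2 * m) ≤ hA.eigenvalues i ^ (2 * m) := pow_le_pow_left₀ hr hr_le _
    _ ≤ ∑ j, hA.eigenvalues j ^ (2 * m) :=
      single_le_sum (fun j _ => (even_two_mul m).pow_nonneg _) (mem_univ i)
    _ = RCLike.re (A ^ (2 * m)).trace := by
      simp_rw [hA.trace_pow_eq_sum_eigenvalues_pow, map_sum, ← RCLike.ofReal_pow,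
        RCLike.ofReal_re]

end Matrix.IsHermitian

theorem indicator_dotProduct_mulVec_indicator {n R : Type*} [Fintype n] [DecidableEq n]
    [CommRing R] {A : Matrix n n R} {S : Finset n}
    (hAS : ∀ i ∈ S, ∀ j ∈ S, A i j = if i = j then 0 else 1) :
    (S : Set n).indicator 1 ⬝ᵥ A *ᵥ (S : Set n).indicator 1 =
      (#S - 1) * ((S : Set n).indicator 1 ⬝ᵥ (S : Set n).indicator (1 : n → R)) := by
  simp only [dotProduct, mulVec, Set.indicator_apply, mem_coe, Pi.one_apply, ite_mul, one_mul,
    zero_mul, mul_ite, mul_one, mul_zero, sum_ite_mem, univ_inter, inter_self]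
  rw [mul_sum]
  refine sum_congr rfl fun i hi => ?_
  rw [sum_congr rfl fun j hj => hAS i hi j hj, sum_ite, sum_const_zero, zero_add, sum_const,
    filter_ne, card_erase_of_mem hi, nsmul_one, Nat.cast_pred (card_pos.2 ⟨i, hi⟩), mul_one]

theorem stmt4_general (n q : ℕ) (hq1 : 1 ≤ q) (hqn : q ≤ n)
    (G : SimpleGraph (Fin n)) [DecidableRel G.Adj] (hcol : G.Colorable q)
    (A : Matrix (Fin n) (Fin n) ℝ)
    (hA : ∀ i j, A i j = if i = j then 0 else if G.Adj i j then -1 else 1)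
    (m : ℕ) :
    ((n : ℝ) / (q : ℝ) - 1) ^ (2 * m) ≤ (A ^ (2 * m)).trace := by
  obtain ⟨c⟩ := hcol
  have hq : (0 : ℝ) < q := by exact_mod_cast hq1
  have hnq : 1 ≤ (n : ℝ) / q := by rw [one_le_div hq]; exact_mod_cast hqn
  have : Nonempty (Fin q) := ⟨⟨0, hq1⟩⟩
  have : Nonempty (Fin n) := ⟨⟨0, by omega⟩⟩
  obtain ⟨b, hb⟩ := Fintype.exists_le_card_fiber_of_nsmul_le_card c (b := (n : ℝ) / q)
    (by simp [nsmul_eq_mul, mul_div_cancel₀ _ hq.ne'])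
  set S : Finset (Fin n) := {i | c i = b}
  have hAS : ∀ i ∈ S, ∀ j ∈ S, A i j = if i = j then 0 else 1 := by
    intro i hi j hj
    have : ¬G.Adj i j := fun h => c.valid h ((mem_filter.1 hi).2.trans (mem_filter.1 hj).2.symm)
    simp [hA, this]
  have hsym : A.IsHermitian := by
    ext i j
    simp [hA, eq_comm, G.adj_comm]
  set v : Fin n → ℝ := (S : Set (Fin n)).indicator 1
  have hvv : v ⬝ᵥ v = #S := by simp [v, dotProduct, Set.indicator_apply]
  have hvAv : (n / q - 1) * (v ⬝ᵥ v) ≤ v ⬝ᵥ A *ᵥ v := by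
    rw [indicator_dotProduct_mulVec_indicator hAS, hvv]
    gcongr
  simpa using hsym.pow_le_re_trace_pow_of_le_rayleigh (v := v) (by simpa [hvv] using hnq.trans hb)
    (sub_nonneg.2 hnq) (by simpa using hvAv) m

/-- Let `1 ≤ q ≤ n` and let `G` be a `q`-colorable simple graph on
`{1,…,n}`. Let `A` be the `±1` adjacency matrix of the complement of `G` with zero
diagonal (`A_{ii} = 0`, `A_{ij} = −1` if `{i,j} ∈ E(G)`, `A_{ij} = +1` otherwise).
Then for every integer `m ≥ 1`, `trace(A^{2m}) ≥ (n/q − 1)^{2m}`. -/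
theorem stmt4 (n q : ℕ) (hn : 1 ≤ n) (hq1 : 1 ≤ q) (hqn : q ≤ n)
    (G : SimpleGraph (Fin n)) [DecidableRel G.Adj] (hcol : G.Colorable q)
    (A : Matrix (Fin n) (Fin n) ℝ)
    (hA : ∀ i j, A i j = if i = j then 0 else if G.Adj i j then -1 else 1)
    (m : ℕ) (hm : 1 ≤ m) :
    ((n : ℝ) / (q : ℝ) - 1) ^ (2 * m) ≤ (A ^ (2 * m)).trace :=
  stmt4_general n q hq1 hqn G hcol A hA m
end

section
/- Let P and Q be finitely supported probability distributions on ℝ^N, let D be a natural number, let C > 0 be real, and suppose g : ℝ^N → ℝ is a polynomial of degree at most D with E_Q[g] = 0, E_P[g] = 1, and E_Q[g²] ≤ C. Then the polynomial f = g + C has degree at most D, satisfies E_Q[f²] > 0, and E_P[f] / sqrt(E_Q[f²]) ≥ sqrt((1+C)/C). -/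
open Finset

/-- A finitely supported probability distribution on `ℝ^N`, encoded as a finitely
supported weight function: nonnegative weights summing to `1`. -/
def IsDist {N : ℕ} (P : (Fin N → ℝ) →₀ ℝ) : Prop :=
  (∀ x, 0 ≤ P x) ∧ ∑ x ∈ P.support, P x = 1

/-- Expectation of `f` under a finitely supported distribution `P`. -/
noncomputable def fexp {N : ℕ} (P : (Fin N → ℝ) →₀ ℝ) (f : (Fin N → ℝ) → ℝ) : ℝ :=
  ∑ x ∈ P.support, P x * f x

/-- Let `P`, `Q` be finitely supported distributions on `ℝ^N`, `D ∈ ℕ`,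
`C > 0`, and `g` a polynomial of degree at most `D` with `E_Q[g] = 0`, `E_P[g] = 1`,
`E_Q[g²] ≤ C`. Then `f = g + C` has degree at most `D`, `E_Q[f²] > 0`, and
`E_P[f]/sqrt(E_Q[f²]) ≥ sqrt((1+C)/C)`. -/
theorem stmt7 (N D : ℕ) (P Q : (Fin N → ℝ) →₀ ℝ) (hP : IsDist P) (hQ : IsDist Q)
    (C : ℝ) (hC : 0 < C) (g : MvPolynomial (Fin N) ℝ) (hdeg : g.totalDegree ≤ D)
    (hQg : fexp Q (fun x => MvPolynomial.eval x g) = 0)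
    (hPg : fexp P (fun x => MvPolynomial.eval x g) = 1)
    (hQg2 : fexp Q (fun x => (MvPolynomial.eval x g) ^ 2) ≤ C) :
    (g + MvPolynomial.C C).totalDegree ≤ D ∧
    0 < fexp Q (fun x => (MvPolynomial.eval x (g + MvPolynomial.C C)) ^ 2) ∧
    Real.sqrt ((1 + C) / C) ≤
      fexp P (fun x => MvPolynomial.eval x (g + MvPolynomial.C C)) /
        Real.sqrt (fexp Q (fun x => (MvPolynomial.eval x (g + MvPolynomial.C C)) ^ 2)) := by
  obtain ⟨hPnn, hPsum⟩ := hP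
  obtain ⟨hQnn, hQsum⟩ := hQ
  have heval : ∀ x, MvPolynomial.eval x (g + MvPolynomial.C C) = MvPolynomial.eval x g + C := by
    intro x; simp
  have hQg' : ∑ x ∈ Q.support, Q x * MvPolynomial.eval x g = 0 := hQg
  have hPg' : ∑ x ∈ P.support, P x * MvPolynomial.eval x g = 1 := hPg
  have hQf2 : fexp Q (fun x => (MvPolynomial.eval x (g + MvPolynomial.C C)) ^ 2)
      = fexp Q (fun x => (MvPolynomial.eval x g) ^ 2) + C ^ 2 := by
    unfold fexp
    simp only [heval]
    have h : ∀ x ∈ Q.support, Q x * (MvPolynomial.eval x g + C) ^ 2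
        = Q x * (MvPolynomial.eval x g) ^ 2 + (2 * C) * (Q x * MvPolynomial.eval x g)
          + C ^ 2 * Q x := by
      intro x _; ring
    rw [Finset.sum_congr rfl h, Finset.sum_add_distrib, Finset.sum_add_distrib,
      ← Finset.mul_sum, ← Finset.mul_sum, hQg', hQsum]
    ring
  have hPf : fexp P (fun x => MvPolynomial.eval x (g + MvPolynomial.C C)) = 1 + C := by
    unfold fexp
    simp only [heval]
    have h : ∀ x ∈ P.support, P x * (MvPolynomial.eval x g + C)
        = P x * MvPolynomial.eval x g + C * P x := by
      intro x _; ring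
    rw [Finset.sum_congr rfl h, Finset.sum_add_distrib, ← Finset.mul_sum, hPg', hPsum]
    ring
  have hE2nn : 0 ≤ fexp Q (fun x => (MvPolynomial.eval x g) ^ 2) :=
    Finset.sum_nonneg fun x _ => mul_nonneg (hQnn x) (sq_nonneg _)
  have hpos : 0 < fexp Q (fun x => (MvPolynomial.eval x (g + MvPolynomial.C C)) ^ 2) := by
    rw [hQf2]; positivity
  refine ⟨?_, hpos, ?_⟩
  · calc (g + MvPolynomial.C C).totalDegree
        ≤ max g.totalDegree (MvPolynomial.C C).totalDegree := MvPolynomial.totalDegree_add _ _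
      _ ≤ D := by simp [MvPolynomial.totalDegree_C, hdeg]
  · rw [hPf, hQf2]
    set E := fexp Q (fun x => (MvPolynomial.eval x g) ^ 2) with hE
    have hEpos : 0 < E + C ^ 2 := by positivity
    rw [le_div_iff₀ (Real.sqrt_pos.mpr hEpos), ← Real.sqrt_mul (by positivity)]
    have hle : (1 + C) / C * (E + C ^ 2) ≤ (1 + C) ^ 2 := by
      rw [div_mul_eq_mul_div, div_le_iff₀ hC]
      nlinarith
    calc Real.sqrt ((1 + C) / C * (E + C ^ 2)) ≤ Real.sqrt ((1 + C) ^ 2) :=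
          Real.sqrt_le_sqrt hle
      _ = 1 + C := Real.sqrt_sq (by linarith)
end

section
/- Fix integers N ≥ 1 and D ≥ 0. Let X be a random element of {−1,+1}^N (with arbitrary finitely supported distribution), identified with the random subset {i : X_i = +1} of {1,…,N}; let Z be uniform on {−1,+1}^N and independent of X, and let Q be the distribution of Y = X ∨ Z (coordinatewise maximum). Let P be any probability distribution on {−1,+1}^N. For α ⊆ {1,…,N} write Y^α = ∏_{i ∈ α} Y_i, c_α = E_{Y∼P}[Y^α], and for β ⊆ α write M_{βα} = Pr(α ∖ X = β). Assume M_{αα} > 0 for every α with |α| ≤ D, and define w_α recursively by w_α = (c_α − Σ_{β ⊊ α} w_β·M_{βα}) / M_{αα}. Then for every polynomial f : ℝ^N → ℝ of degree at most D, (E_{Y∼P}[f(Y)])² ≤ E_{Y∼Q}[f(Y)²] · Σ_{α : |α| ≤ D} w_α². -/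
open Finset

/-- The sign vector in `{-1,+1}^N` associated with a subset `S ⊆ {1,…,N}`:
`+1` on `S`, `-1` off `S`. -/
def toSign {N : ℕ} (S : Finset (Fin N)) : Fin N → ℝ := fun i => if i ∈ S then 1 else -1


lemma sgnPowAux (x : ℝ) (hx : x = 1 ∨ x = -1) (k : ℕ) :
    x ^ k = if Odd k then x else 1 := by
  rcases hx with h | h <;> subst h
  · simp
  · rcases Nat.even_or_odd k with h | h
    · simp [h.neg_one_pow, Nat.not_odd_iff_even.mpr h]
    · simp [h.neg_one_pow, h]

lemma eval_sign {n : ℕ} (x : Fin n → ℝ) (hx : ∀ i, x i = 1 ∨ x i = -1)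
    (f : MvPolynomial (Fin n) ℝ) :
    MvPolynomial.eval x f =
      ∑ m ∈ f.support, f.coeff m * ∏ i ∈ m.support.filter (fun i => Odd (m i)), x i := by
  rw [MvPolynomial.eval_eq]
  refine Finset.sum_congr rfl fun m _ => ?_
  congr 1
  rw [Finset.prod_filter]
  exact Finset.prod_congr rfl fun i _ => by rw [sgnPowAux (x i) (hx i)]

lemma orth {N : ℕ} (δ : Finset (Fin N)) :
    ∑ z : Fin N → Bool, ∏ i ∈ δ, (if z i then (1:ℝ) else -1) =
      if δ = ∅ then (2:ℝ) ^ N else 0 := by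
  classical
  have h1 : ∀ z : Fin N → Bool, ∏ i ∈ δ, (if z i then (1:ℝ) else -1)
      = ∏ i : Fin N, (if i ∈ δ then (if z i then (1:ℝ) else -1) else 1) := by
    intro z
    rw [Finset.prod_ite_mem, Finset.univ_inter]
  simp only [h1]
  have hps := Fintype.prod_sum (κ := fun _ : Fin N => Bool)
    (f := fun (i : Fin N) (b : Bool) => if i ∈ δ then (if b then (1:ℝ) else -1) else 1)
  rw [← hps]
  have h2 : ∀ i : Fin N, (∑ b ∈ (Finset.univ : Finset Bool),
      (if i ∈ δ then (if b then (1:ℝ) else -1) else 1)) = if i ∈ δ then 0 else 2 := by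
    intro i; by_cases h : i ∈ δ <;> simp [h]
  rw [Finset.prod_congr rfl fun i _ => h2 i]
  by_cases hδ : δ = ∅
  · subst hδ; simp
  · rw [if_neg hδ]
    obtain ⟨i₀, hi₀⟩ := Finset.nonempty_iff_ne_empty.mpr hδ
    exact Finset.prod_eq_zero (Finset.mem_univ i₀) (by simp [hi₀])

lemma orth2 {N : ℕ} (γ β : Finset (Fin N)) :
    ∑ z : Fin N → Bool,
      (∏ i ∈ γ, (if z i then (1:ℝ) else -1)) * ∏ i ∈ β, (if z i then (1:ℝ) else -1) =
      if γ = β then (2:ℝ) ^ N else 0 := by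
  classical
  have key : ∀ z : Fin N → Bool,
      (∏ i ∈ γ, (if z i then (1:ℝ) else -1)) * ∏ i ∈ β, (if z i then (1:ℝ) else -1)
      = ∏ i ∈ (γ \ β) ∪ (β \ γ), (if z i then (1:ℝ) else -1) := by
    intro z
    set g : Fin N → ℝ := fun i => if z i then (1:ℝ) else -1 with hg
    have h2 : (∏ i ∈ γ ∩ β, g i) * ∏ i ∈ γ ∩ β, g i = 1 := by
      rw [← Finset.prod_mul_distrib]
      exact Finset.prod_eq_one fun i _ => by by_cases h : z i <;> simp [hg, h]
    have hγ : ∏ i ∈ γ, g i = (∏ i ∈ γ \ β, g i) * ∏ i ∈ γ ∩ β, g i := by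
      rw [← Finset.prod_union (Finset.disjoint_sdiff_inter γ β), Finset.sdiff_union_inter]
    have hβ : ∏ i ∈ β, g i = (∏ i ∈ β \ γ, g i) * ∏ i ∈ γ ∩ β, g i := by
      rw [Finset.inter_comm, ← Finset.prod_union (Finset.disjoint_sdiff_inter β γ),
        Finset.sdiff_union_inter]
    have h3 : ∏ i ∈ γ \ β ∪ β \ γ, g i = (∏ i ∈ γ \ β, g i) * ∏ i ∈ β \ γ, g i :=
      Finset.prod_union disjoint_sdiff_sdiff
    rw [hγ, hβ, h3]
    calc ((∏ i ∈ γ \ β, g i) * ∏ i ∈ γ ∩ β, g i) * ((∏ i ∈ β \ γ, g i) * ∏ i ∈ γ ∩ β, g i)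
        = ((∏ i ∈ γ \ β, g i) * ∏ i ∈ β \ γ, g i) * ((∏ i ∈ γ ∩ β, g i) * ∏ i ∈ γ ∩ β, g i) := by
          ring
      _ = (∏ i ∈ γ \ β, g i) * ∏ i ∈ β \ γ, g i := by rw [h2, mul_one]
  simp only [key]
  rw [orth]
  by_cases h : γ = β
  · subst h; simp
  · rw [if_neg h, if_neg]
    intro hc
    rw [Finset.union_eq_empty] at hc
    exact h (Finset.Subset.antisymm (Finset.sdiff_eq_empty_iff_subset.mp hc.1)
      (Finset.sdiff_eq_empty_iff_subset.mp hc.2))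

/-- Let `X` be a random subset of `{1,…,N}` (sign vector via the
`+1`-coordinates) with arbitrary distribution `pX`, let `Z` be uniform on `{-1,+1}^N`
independent of `X`, and let `Q` be the law of `Y = X ∨ Z`. Let `P` (given by `pP`) be
any distribution on `{-1,+1}^N`. With `c_α = E_{Y∼P}[Y^α]`, `M_{βα} = Pr(α ∖ X = β)`
assumed positive on the diagonal for `|α| ≤ D`, and `w` defined by the recursion
`w_α = (c_α − ∑_{β ⊊ α} w_β M_{βα}) / M_{αα}`, every polynomial `f` of degree at most
`D` satisfies `(E_{Y∼P}[f(Y)])² ≤ E_{Y∼Q}[f(Y)²] · ∑_{|α| ≤ D} w_α²`. -/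
theorem stmt8 (N D : ℕ) (hN : 1 ≤ N)
    (pX pP : Finset (Fin N) → ℝ)
    (hpX0 : ∀ S, 0 ≤ pX S) (hpX1 : ∑ S : Finset (Fin N), pX S = 1)
    (hpP0 : ∀ S, 0 ≤ pP S) (hpP1 : ∑ S : Finset (Fin N), pP S = 1)
    (c : Finset (Fin N) → ℝ)
    (hc : ∀ α, c α = ∑ S : Finset (Fin N), pP S * ∏ i ∈ α, toSign S i)
    (M : Finset (Fin N) → Finset (Fin N) → ℝ)
    (hM : ∀ β α, M β α = ∑ S : Finset (Fin N), pX S * (if α \ S = β then (1 : ℝ) else 0))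
    (hMpos : ∀ α : Finset (Fin N), α.card ≤ D → 0 < M α α)
    (w : Finset (Fin N) → ℝ)
    (hw : ∀ α, w α = (c α - ∑ β ∈ α.powerset.erase α, w β * M β α) / M α α)
    (f : MvPolynomial (Fin N) ℝ) (hf : f.totalDegree ≤ D) :
    (∑ S : Finset (Fin N), pP S * MvPolynomial.eval (toSign S) f) ^ 2 ≤
      (∑ S : Finset (Fin N), pX S *
          ((∑ z : Fin N → Bool,
            (MvPolynomial.eval (toSign (S ∪ Finset.univ.filter (fun i => z i = true))) f) ^ 2) /
            (Fintype.card (Fin N → Bool) : ℝ))) *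
        ∑ α ∈ Finset.univ.filter (fun α : Finset (Fin N) => α.card ≤ D), w α ^ 2 := by
  classical
  have h2N : ((2:ℝ)^N) ≠ 0 := by positivity
  have hcard : (Fintype.card (Fin N → Bool) : ℝ) = (2:ℝ)^N := by
    simp [Fintype.card_fun]
  set A : Finset (Finset (Fin N)) := univ.filter (fun α : Finset (Fin N) => α.card ≤ D)
    with hAdef
  set G : (Fin N → Bool) → ℝ :=
    fun z => ∑ β ∈ A, w β * ∏ i ∈ β, (if z i then (1:ℝ) else -1) with hGdef
  have hMzero : ∀ β α : Finset (Fin N), ¬ β ⊆ α → M β α = 0 := by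
    intro β α h
    rw [hM]
    refine Finset.sum_eq_zero fun S _ => ?_
    rw [if_neg fun hc => h (by rw [← hc]; exact Finset.sdiff_subset), mul_zero]
  have hkey : ∀ α : Finset (Fin N), α.card ≤ D → ∑ β ∈ A, w β * M β α = c α := by
    intro α hα
    have hsub : α.powerset ⊆ A := by
      intro β hβ
      simp only [hAdef, Finset.mem_filter, Finset.mem_univ, true_and]
      exact le_trans (Finset.card_le_card (Finset.mem_powerset.mp hβ)) hα
    rw [← Finset.sum_subset hsub (fun β _ hβ => by
      rw [hMzero β α fun hs => hβ (Finset.mem_powerset.mpr hs), mul_zero])]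
    rw [← Finset.sum_erase_add _ _ (Finset.mem_powerset_self α), hw α,
      div_mul_cancel₀ _ (ne_of_gt (hMpos α hα))]
    ring
  have hT : ∀ α : Finset (Fin N), α.card ≤ D →
      ∑ S : Finset (Fin N), ∑ z : Fin N → Bool,
        pX S * ((∏ i ∈ α, (if i ∈ S then (1:ℝ) else if z i then 1 else -1)) * G z / (2:ℝ)^N)
      = c α := by
    intro α hα
    have inner : ∀ S : Finset (Fin N),
        ∑ z : Fin N → Bool,
          (∏ i ∈ α, (if i ∈ S then (1:ℝ) else if z i then 1 else -1)) * G z / (2:ℝ)^N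
        = ∑ β ∈ A, w β * (if α \ S = β then (1:ℝ) else 0) := by
      intro S
      have hprod : ∀ z : Fin N → Bool,
          ∏ i ∈ α, (if i ∈ S then (1:ℝ) else if z i then 1 else -1)
          = ∏ i ∈ α \ S, (if z i then (1:ℝ) else -1) := by
        intro z
        rw [Finset.sdiff_eq_filter, Finset.prod_filter]
        exact Finset.prod_congr rfl fun i _ => by by_cases h : i ∈ S <;> simp [h]
      simp only [hprod, hGdef, Finset.mul_sum, Finset.sum_div]
      rw [Finset.sum_comm]
      refine Finset.sum_congr rfl fun β _ => ?_
      have hstep : ∀ z : Fin N → Bool,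
          (∏ i ∈ α \ S, (if z i then (1:ℝ) else -1)) *
              (w β * ∏ i ∈ β, (if z i then (1:ℝ) else -1)) / (2:ℝ)^N
          = w β * (((∏ i ∈ α \ S, (if z i then (1:ℝ) else -1)) *
              ∏ i ∈ β, (if z i then (1:ℝ) else -1)) / (2:ℝ)^N) := fun z => by ring
      simp only [hstep]
      rw [← Finset.mul_sum, ← Finset.sum_div, orth2]
      by_cases h : α \ S = β
      · rw [if_pos h, if_pos h, div_self h2N]
      · rw [if_neg h, if_neg h, zero_div]
    calc ∑ S : Finset (Fin N), ∑ z : Fin N → Bool,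
          pX S * ((∏ i ∈ α, (if i ∈ S then (1:ℝ) else if z i then 1 else -1)) * G z / (2:ℝ)^N)
        = ∑ S : Finset (Fin N), pX S * ∑ β ∈ A, w β * (if α \ S = β then (1:ℝ) else 0) := by
          refine Finset.sum_congr rfl fun S _ => ?_
          rw [← Finset.mul_sum, inner S]
      _ = ∑ β ∈ A, w β * M β α := by
          simp only [Finset.mul_sum]
          rw [Finset.sum_comm]
          refine Finset.sum_congr rfl fun β _ => ?_
          rw [hM, Finset.mul_sum]
          exact Finset.sum_congr rfl fun S _ => by ring
      _ = c α := hkey α hα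
  have hsign1 : ∀ S : Finset (Fin N), ∀ i, toSign S i = 1 ∨ toSign S i = -1 := by
    intro S i; unfold toSign; by_cases h : i ∈ S <;> simp [h]
  have hy : ∀ (S : Finset (Fin N)) (z : Fin N → Bool),
      toSign (S ∪ Finset.univ.filter (fun i => z i = true))
      = fun i => if i ∈ S then (1:ℝ) else if z i then 1 else -1 := by
    intro S z; funext i
    unfold toSign
    by_cases hS : i ∈ S <;> by_cases hz : z i <;> simp [hS, hz]
  have hdeg : ∀ m ∈ f.support, (m.support.filter fun i => Odd (m i)).card ≤ D := by
    intro m hm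
    have h1 : (m.support.filter fun i => Odd (m i)).card
        ≤ ∑ i ∈ m.support.filter (fun i => Odd (m i)), m i := by
      rw [Finset.card_eq_sum_ones]
      exact Finset.sum_le_sum fun i hi => (Finset.mem_filter.mp hi).2.pos
    have h2 : ∑ i ∈ m.support.filter (fun i => Odd (m i)), m i ≤ ∑ i ∈ m.support, m i :=
      Finset.sum_le_sum_of_subset (Finset.filter_subset _ _)
    have h3 : (m.sum fun _ e => e) ≤ D := le_trans (MvPolynomial.le_totalDegree hm) hf
    exact le_trans (le_trans h1 h2) h3
  have heval : ∀ (S : Finset (Fin N)) (z : Fin N → Bool),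
      MvPolynomial.eval (toSign (S ∪ Finset.univ.filter fun i => z i = true)) f
      = ∑ m ∈ f.support, f.coeff m * ∏ i ∈ m.support.filter (fun i => Odd (m i)),
          (if i ∈ S then (1:ℝ) else if z i then 1 else -1) := by
    intro S z
    rw [hy S z]
    exact eval_sign _ (fun i => by
      by_cases hS : i ∈ S <;> by_cases hz : z i <;> simp [hS, hz]) f
  have hevalP : ∀ S : Finset (Fin N),
      MvPolynomial.eval (toSign S) f
      = ∑ m ∈ f.support, f.coeff m * ∏ i ∈ m.support.filter (fun i => Odd (m i)), toSign S i :=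
    fun S => eval_sign _ (hsign1 S) f
  have hEQ : ∑ S : Finset (Fin N), ∑ z : Fin N → Bool,
      pX S * (MvPolynomial.eval (toSign (S ∪ Finset.univ.filter fun i => z i = true)) f
        * G z / (2:ℝ)^N)
      = ∑ S : Finset (Fin N), pP S * MvPolynomial.eval (toSign S) f := by
    calc ∑ S : Finset (Fin N), ∑ z : Fin N → Bool,
        pX S * (MvPolynomial.eval (toSign (S ∪ Finset.univ.filter fun i => z i = true)) f
          * G z / (2:ℝ)^N)
        = ∑ S : Finset (Fin N), ∑ z : Fin N → Bool, ∑ m ∈ f.support,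
            f.coeff m * (pX S * ((∏ i ∈ m.support.filter (fun i => Odd (m i)),
              (if i ∈ S then (1:ℝ) else if z i then 1 else -1)) * G z / (2:ℝ)^N)) := by
          refine Finset.sum_congr rfl fun S _ => Finset.sum_congr rfl fun z _ => ?_
          rw [heval S z, Finset.sum_mul, Finset.sum_div, Finset.mul_sum]
          exact Finset.sum_congr rfl fun m _ => by ring
      _ = ∑ S : Finset (Fin N), ∑ m ∈ f.support, ∑ z : Fin N → Bool,
            f.coeff m * (pX S * ((∏ i ∈ m.support.filter (fun i => Odd (m i)),
              (if i ∈ S then (1:ℝ) else if z i then 1 else -1)) * G z / (2:ℝ)^N)) :=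
          Finset.sum_congr rfl fun S _ => Finset.sum_comm
      _ = ∑ m ∈ f.support, ∑ S : Finset (Fin N), ∑ z : Fin N → Bool,
            f.coeff m * (pX S * ((∏ i ∈ m.support.filter (fun i => Odd (m i)),
              (if i ∈ S then (1:ℝ) else if z i then 1 else -1)) * G z / (2:ℝ)^N)) :=
          Finset.sum_comm
      _ = ∑ m ∈ f.support, f.coeff m * c (m.support.filter fun i => Odd (m i)) := by
          refine Finset.sum_congr rfl fun m hm => ?_
          rw [← hT _ (hdeg m hm), Finset.mul_sum]
          refine Finset.sum_congr rfl fun S _ => ?_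
          rw [Finset.mul_sum]
      _ = ∑ S : Finset (Fin N), pP S * MvPolynomial.eval (toSign S) f := by
          simp only [hevalP, Finset.mul_sum]
          rw [Finset.sum_comm]
          refine Finset.sum_congr rfl fun m _ => ?_
          rw [hc, Finset.mul_sum]
          exact Finset.sum_congr rfl fun S _ => by ring
  have hG2 : ∑ z : Fin N → Bool, G z * G z = (2:ℝ)^N * ∑ β ∈ A, w β ^ 2 := by
    have step1 : ∀ z : Fin N → Bool, G z * G z = ∑ β ∈ A, ∑ γ ∈ A,
        (w β * w γ) * ((∏ i ∈ β, (if z i then (1:ℝ) else -1)) *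
          ∏ i ∈ γ, (if z i then (1:ℝ) else -1)) := by
      intro z
      rw [hGdef]
      rw [Finset.sum_mul_sum]
      exact Finset.sum_congr rfl fun β _ => Finset.sum_congr rfl fun γ _ => by ring
    calc ∑ z : Fin N → Bool, G z * G z
        = ∑ z : Fin N → Bool, ∑ β ∈ A, ∑ γ ∈ A,
            (w β * w γ) * ((∏ i ∈ β, (if z i then (1:ℝ) else -1)) *
              ∏ i ∈ γ, (if z i then (1:ℝ) else -1)) :=
          Finset.sum_congr rfl fun z _ => step1 z
      _ = ∑ β ∈ A, ∑ z : Fin N → Bool, ∑ γ ∈ A,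
            (w β * w γ) * ((∏ i ∈ β, (if z i then (1:ℝ) else -1)) *
              ∏ i ∈ γ, (if z i then (1:ℝ) else -1)) := Finset.sum_comm
      _ = ∑ β ∈ A, ∑ γ ∈ A, ∑ z : Fin N → Bool,
            (w β * w γ) * ((∏ i ∈ β, (if z i then (1:ℝ) else -1)) *
              ∏ i ∈ γ, (if z i then (1:ℝ) else -1)) :=
          Finset.sum_congr rfl fun β _ => Finset.sum_comm
      _ = ∑ β ∈ A, w β ^ 2 * (2:ℝ)^N := by
          refine Finset.sum_congr rfl fun β hβ => ?_
          calc ∑ γ ∈ A, ∑ z : Fin N → Bool,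
              (w β * w γ) * ((∏ i ∈ β, (if z i then (1:ℝ) else -1)) *
                ∏ i ∈ γ, (if z i then (1:ℝ) else -1))
              = ∑ γ ∈ A, if β = γ then (w β * w γ) * (2:ℝ)^N else 0 := by
                refine Finset.sum_congr rfl fun γ _ => ?_
                rw [← Finset.mul_sum, orth2]
                by_cases h : β = γ
                · rw [if_pos h, if_pos h]
                · rw [if_neg h, if_neg h, mul_zero]
            _ = w β ^ 2 * (2:ℝ)^N := by
                rw [Finset.sum_ite_eq, if_pos hβ]; ring
      _ = (2:ℝ)^N * ∑ β ∈ A, w β ^ 2 := by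
          rw [Finset.mul_sum]
          exact Finset.sum_congr rfl fun β _ => by ring
  have hG2' : ∑ S : Finset (Fin N), ∑ z : Fin N → Bool, pX S * (G z * G z / (2:ℝ)^N)
      = ∑ β ∈ A, w β ^ 2 := by
    have hin : ∀ S : Finset (Fin N), ∑ z : Fin N → Bool, pX S * (G z * G z / (2:ℝ)^N)
        = pX S * ∑ β ∈ A, w β ^ 2 := by
      intro S
      rw [← Finset.mul_sum, ← Finset.sum_div, hG2, mul_div_cancel_left₀ _ h2N]
    rw [Finset.sum_congr rfl fun S _ => hin S, ← Finset.sum_mul, hpX1, one_mul]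
  -- Cauchy-Schwarz
  set u : Finset (Fin N) × (Fin N → Bool) → ℝ := fun p =>
    Real.sqrt (pX p.1 / (2:ℝ)^N) *
      MvPolynomial.eval (toSign (p.1 ∪ Finset.univ.filter fun i => p.2 i = true)) f with hu
  set v : Finset (Fin N) × (Fin N → Bool) → ℝ := fun p =>
    Real.sqrt (pX p.1 / (2:ℝ)^N) * G p.2 with hv
  have hsq : ∀ S : Finset (Fin N),
      Real.sqrt (pX S / (2:ℝ)^N) * Real.sqrt (pX S / (2:ℝ)^N) = pX S / (2:ℝ)^N :=
    fun S => Real.mul_self_sqrt (div_nonneg (hpX0 S) (by positivity))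
  have CS := Finset.sum_mul_sq_le_sq_mul_sq Finset.univ u v
  have huv : ∑ p : Finset (Fin N) × (Fin N → Bool), u p * v p
      = ∑ S : Finset (Fin N), pP S * MvPolynomial.eval (toSign S) f := by
    rw [← hEQ, Fintype.sum_prod_type]
    refine Finset.sum_congr rfl fun S _ => Finset.sum_congr rfl fun z _ => ?_
    simp only [hu, hv]
    calc (Real.sqrt (pX S / (2:ℝ)^N) *
          MvPolynomial.eval (toSign (S ∪ Finset.univ.filter fun i => z i = true)) f) *
          (Real.sqrt (pX S / (2:ℝ)^N) * G z)
        = (Real.sqrt (pX S / (2:ℝ)^N) * Real.sqrt (pX S / (2:ℝ)^N)) *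
            (MvPolynomial.eval (toSign (S ∪ Finset.univ.filter fun i => z i = true)) f * G z) := by
          ring
      _ = pX S / (2:ℝ)^N *
            (MvPolynomial.eval (toSign (S ∪ Finset.univ.filter fun i => z i = true)) f * G z) := by
          rw [hsq S]
      _ = pX S * (MvPolynomial.eval (toSign (S ∪ Finset.univ.filter fun i => z i = true)) f
            * G z / (2:ℝ)^N) := by ring
  have hu2 : ∑ p : Finset (Fin N) × (Fin N → Bool), u p ^ 2
      = ∑ S : Finset (Fin N), pX S *
          ((∑ z : Fin N → Bool,
            (MvPolynomial.eval (toSign (S ∪ Finset.univ.filter (fun i => z i = true))) f) ^ 2) /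
            (Fintype.card (Fin N → Bool) : ℝ)) := by
    rw [hcard, Fintype.sum_prod_type]
    refine Finset.sum_congr rfl fun S _ => ?_
    rw [div_eq_mul_inv, Finset.sum_mul, Finset.mul_sum]
    refine Finset.sum_congr rfl fun z _ => ?_
    simp only [hu]
    rw [mul_pow, sq (Real.sqrt (pX S / (2:ℝ)^N)), hsq S]
    field_simp
  have hv2 : ∑ p : Finset (Fin N) × (Fin N → Bool), v p ^ 2
      = ∑ α ∈ A, w α ^ 2 := by
    rw [← hG2', Fintype.sum_prod_type]
    refine Finset.sum_congr rfl fun S _ => Finset.sum_congr rfl fun z _ => ?_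
    simp only [hv]
    rw [mul_pow, sq (Real.sqrt (pX S / (2:ℝ)^N)), hsq S, sq (G z)]
    ring
  calc (∑ S : Finset (Fin N), pP S * MvPolynomial.eval (toSign S) f) ^ 2
      = (∑ p : Finset (Fin N) × (Fin N → Bool), u p * v p) ^ 2 := by rw [huv]
    _ ≤ (∑ p : Finset (Fin N) × (Fin N → Bool), u p ^ 2) *
          ∑ p : Finset (Fin N) × (Fin N → Bool), v p ^ 2 := CS
    _ = _ := by rw [hu2, hv2]
end

section
/- Let E be a finite set partitioned as E = E₁ ⊔ E₂ (E₁ and E₂ disjoint). Let c assign a real number to each subset of E with c(∅) = 1, and let R assign a real number R(β, α) to each pair of subsets β ⊆ α ⊆ E with R(α, α) = 1 for all α. Assume that for all β₁ ⊆ α₁ ⊆ E₁ and β₂ ⊆ α₂ ⊆ E₂: c(α₁ ∪ α₂) = c(α₁)·c(α₂) and R(β₁ ∪ β₂, α₁ ∪ α₂) = R(β₁, α₁)·R(β₂, α₂). Define ŵ on subsets of E by the recursion ŵ(α) = c(α) − Σ_{β ⊊ α} ŵ(β)·R(β, α) (so in particular ŵ(∅) = 1). Then for all α₁ ⊆ E₁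 and α₂ ⊆ E₂, ŵ(α₁ ∪ α₂) = ŵ(α₁)·ŵ(α₂). -/
open Finset

/-- Let `E = E₁ ⊔ E₂` be a finite set split into two disjoint parts,
`c` a set function with `c(∅) = 1`, and `R(·,·)` a pair function with `R(α,α) = 1`,
such that `c` and `R` are multiplicative across the two parts. If `ŵ` satisfies the
recursion `ŵ(α) = c(α) − ∑_{β ⊊ α} ŵ(β)·R(β,α)` on subsets of `E`, then
`ŵ(α₁ ∪ α₂) = ŵ(α₁)·ŵ(α₂)` for all `α₁ ⊆ E₁`, `α₂ ⊆ E₂`. -/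
theorem stmt9 {ι : Type*} [DecidableEq ι] (E₁ E₂ : Finset ι) (hdisj : Disjoint E₁ E₂)
    (c : Finset ι → ℝ) (hc0 : c ∅ = 1)
    (R : Finset ι → Finset ι → ℝ) (hRdiag : ∀ α, R α α = 1)
    (hcmul : ∀ α₁ α₂, α₁ ⊆ E₁ → α₂ ⊆ E₂ → c (α₁ ∪ α₂) = c α₁ * c α₂)
    (hRmul : ∀ β₁ α₁ β₂ α₂, β₁ ⊆ α₁ → α₁ ⊆ E₁ → β₂ ⊆ α₂ → α₂ ⊆ E₂ →
      R (β₁ ∪ β₂) (α₁ ∪ α₂) = R β₁ α₁ * R β₂ α₂)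
    (w : Finset ι → ℝ)
    (hw : ∀ α, α ⊆ E₁ ∪ E₂ → w α = c α - ∑ β ∈ α.powerset.erase α, w β * R β α) :
    ∀ α₁ α₂, α₁ ⊆ E₁ → α₂ ⊆ E₂ → w (α₁ ∪ α₂) = w α₁ * w α₂ := by
  have key : ∀ α, α ⊆ E₁ ∪ E₂ → ∑ β ∈ α.powerset, w β * R β α = c α := by
    intro α hα
    rw [← Finset.sum_erase_add _ _ (Finset.mem_powerset_self α), hRdiag, mul_one, hw α hα]
    ring
  suffices H : ∀ n : ℕ, ∀ α₁ α₂ : Finset ι, α₁ ⊆ E₁ → α₂ ⊆ E₂ →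
      α₁.card + α₂.card ≤ n → w (α₁ ∪ α₂) = w α₁ * w α₂ by
    intro α₁ α₂ h1 h2; exact H _ α₁ α₂ h1 h2 le_rfl
  have hwempty : w ∅ = 1 := by
    have := hw ∅ (empty_subset _)
    simpa using this.trans (by simp [hc0])
  intro n
  induction n with
  | zero =>
    intro α₁ α₂ h1 h2 hn
    have h1' : α₁ = ∅ := card_eq_zero.mp (by omega)
    have h2' : α₂ = ∅ := card_eq_zero.mp (by omega)
    simp [h1', h2', hwempty]
  | succ n ih =>
    intro α₁ α₂ h1 h2 hn
    have hd : Disjoint α₁ α₂ := hdisj.mono h1 h2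
    have hsub : α₁ ∪ α₂ ⊆ E₁ ∪ E₂ := union_subset_union h1 h2
    -- the bijection between subsets of α₁ ∪ α₂ and pairs of subsets
    have hbij : ∀ f : Finset ι → ℝ,
        ∑ β ∈ (α₁ ∪ α₂).powerset.erase (α₁ ∪ α₂), f β
          = ∑ p ∈ (α₁.powerset ×ˢ α₂.powerset).erase (α₁, α₂), f (p.1 ∪ p.2) := by
      intro f
      have e1 : ∀ p : Finset ι × Finset ι, p.1 ⊆ α₁ → p.2 ⊆ α₂ →
          (p.1 ∪ p.2) ∩ α₁ = p.1 := by
        intro p hp1 hp2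
        ext x
        simp only [mem_inter, mem_union]
        constructor
        · rintro ⟨h | h, hx⟩
          · exact h
          · exact absurd hx (disjoint_right.mp hd (hp2 h))
        · intro h; exact ⟨Or.inl h, hp1 h⟩
      have e2 : ∀ p : Finset ι × Finset ι, p.1 ⊆ α₁ → p.2 ⊆ α₂ →
          (p.1 ∪ p.2) ∩ α₂ = p.2 := by
        intro p hp1 hp2
        ext x
        simp only [mem_inter, mem_union]
        constructor
        · rintro ⟨h | h, hx⟩
          · exact absurd hx (disjoint_left.mp hd (hp1 h))
          · exact h
        · intro h; exact ⟨Or.inr h, hp2 h⟩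
      refine Finset.sum_nbij' (fun β => (β ∩ α₁, β ∩ α₂)) (fun p => p.1 ∪ p.2) ?_ ?_ ?_ ?_ ?_
      · intro β hβ
        rw [mem_erase, mem_powerset] at hβ
        rw [mem_erase, mem_product, mem_powerset, mem_powerset]
        refine ⟨?_, inter_subset_right, inter_subset_right⟩
        intro hc
        apply hβ.1
        have h1e : β ∩ α₁ = α₁ := congrArg Prod.fst hc
        have h2e : β ∩ α₂ = α₂ := congrArg Prod.snd hc
        apply subset_antisymm hβ.2
        rw [← h1e, ← h2e]
        exact union_subset inter_subset_left inter_subset_left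
      · intro p hp
        rw [mem_erase, mem_product, mem_powerset, mem_powerset] at hp
        rw [mem_erase, mem_powerset]
        refine ⟨?_, union_subset_union hp.2.1 hp.2.2⟩
        intro hc
        apply hp.1
        have f1 := e1 p hp.2.1 hp.2.2
        have f2 := e2 p hp.2.1 hp.2.2
        rw [hc, e1 (α₁, α₂) le_rfl le_rfl] at f1
        rw [hc, e2 (α₁, α₂) le_rfl le_rfl] at f2
        exact Prod.ext f1.symm f2.symm
      · intro β hβ
        rw [mem_erase, mem_powerset] at hβ
        dsimp only
        rw [← inter_union_distrib_left, inter_eq_left.mpr hβ.2]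
      · intro p hp
        rw [mem_erase, mem_product, mem_powerset, mem_powerset] at hp
        rw [e1 p hp.2.1 hp.2.2, e2 p hp.2.1 hp.2.2]
      · intro β hβ
        rw [mem_erase, mem_powerset] at hβ
        dsimp only
        rw [← inter_union_distrib_left, inter_eq_left.mpr hβ.2]
    -- main computation
    rw [hw _ hsub, hbij]
    have hcongr : ∑ p ∈ (α₁.powerset ×ˢ α₂.powerset).erase (α₁, α₂),
        w (p.1 ∪ p.2) * R (p.1 ∪ p.2) (α₁ ∪ α₂)
        = ∑ p ∈ (α₁.powerset ×ˢ α₂.powerset).erase (α₁, α₂),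
          (w p.1 * R p.1 α₁) * (w p.2 * R p.2 α₂) := by
      refine Finset.sum_congr rfl ?_
      intro p hp
      rw [mem_erase, mem_product, mem_powerset, mem_powerset] at hp
      have hcard : p.1.card + p.2.card ≤ n := by
        have c1 := card_le_card hp.2.1
        have c2 := card_le_card hp.2.2
        rcases eq_or_ne p.1 α₁ with he | hne
        · have : p.2 ≠ α₂ := fun h => hp.1 (Prod.ext he h)
          have := card_lt_card (lt_of_le_of_ne hp.2.2 this)
          omega
        · have := card_lt_card (lt_of_le_of_ne hp.2.1 hne)
          omega
      rw [ih p.1 p.2 (hp.2.1.trans h1) (hp.2.2.trans h2) hcard,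
        hRmul p.1 α₁ p.2 α₂ hp.2.1 h1 hp.2.2 h2]
      ring
    rw [hcongr]
    have hfull : ∑ p ∈ α₁.powerset ×ˢ α₂.powerset,
        (w p.1 * R p.1 α₁) * (w p.2 * R p.2 α₂) = c α₁ * c α₂ := by
      rw [← key α₁ (h1.trans subset_union_left), ← key α₂ (h2.trans subset_union_right),
        Finset.sum_mul_sum, ← Finset.sum_product']
    have hmem : (α₁, α₂) ∈ α₁.powerset ×ˢ α₂.powerset := by
      rw [mem_product, mem_powerset, mem_powerset]; exact ⟨le_rfl, le_rfl⟩
    have hsplit := Finset.sum_erase_add (α₁.powerset ×ˢ α₂.powerset)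
      (fun p => (w p.1 * R p.1 α₁) * (w p.2 * R p.2 α₂)) hmem
    simp only [hRdiag, mul_one] at hsplit
    rw [hcmul _ _ h1 h2]
    rw [hfull] at hsplit
    linarith [hsplit]
end

section
/- Let n ≥ 1 and q ≥ 1 be integers and let α be a nonempty set of unordered pairs of distinct elements of {1,…,n} that is connected (the graph with edge set α on its vertex support V(α) is connected, where V(α) is the set of vertices incident to at least one pair of α). Then E_{Y ∼ MC(n,q)}[∏_{e ∈ α} Y_e] = q^{1 − |V(α)|}. -/
open Finset

/-- Unordered pairs of distinct elements of `Fin n`, encoded as ordered pairs `(i,j)` with `i < j`. -/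
abbrev Edge (n : ℕ) := {p : Fin n × Fin n // p.1 < p.2}

/-- Sample space for the planted multicoloring distribution `MC(n,q)`:
a uniformly random labeling of the vertices together with independent
uniform Rademacher variables, one for each edge. -/
abbrev MCSpace (n q : ℕ) := (Fin n → Fin q) × (Edge n → Bool)

/-- The observed sign vector `Y ∈ {-1,+1}^{E(K_n)}` of `MC(n,q)`: `Y_{ij} = +1`
if `i,j` have the same label, otherwise an independent uniform sign. -/
def mcY {n q : ℕ} (ω : MCSpace n q) (e : Edge n) : ℝ :=
  if ω.1 e.val.1 = ω.1 e.val.2 then 1 else (if ω.2 e then 1 else -1)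

/-- Expectation of `f(Y)` for `Y ∼ MC(n,q)` (the sample space is uniform). -/
noncomputable def mcExp (n q : ℕ) (f : (Edge n → ℝ) → ℝ) : ℝ :=
  (∑ ω : MCSpace n q, f (fun e => mcY ω e)) / (Fintype.card (MCSpace n q) : ℝ)

/-- Variance of `f(Y)` for `Y ∼ MC(n,q)`. -/
noncomputable def mcVar (n q : ℕ) (f : (Edge n → ℝ) → ℝ) : ℝ :=
  mcExp n q (fun Y => (f Y - mcExp n q f) ^ 2)

/-- `V(α)`: the set of vertices incident to at least one pair of `α`. -/
def vertexSet {n : ℕ} (α : Finset (Edge n)) : Finset (Fin n) :=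
  α.biUnion (fun e => {e.val.1, e.val.2})

/-- Adjacency relation of the graph with edge set `α`. -/
def edgeAdj {n : ℕ} (α : Finset (Edge n)) (u v : Fin n) : Prop :=
  ∃ e ∈ α, (e.val.1 = u ∧ e.val.2 = v) ∨ (e.val.1 = v ∧ e.val.2 = u)

/-- The graph with edge set `α` on its vertex support `V(α)` is connected: any two
vertices of `V(α)` are joined by a walk using edges of `α`. -/
def ConnectedEdges {n : ℕ} (α : Finset (Edge n)) : Prop :=
  ∀ u ∈ vertexSet α, ∀ v ∈ vertexSet α, Relation.ReflTransGen (edgeAdj α) u v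

lemma count_const (n q : ℕ) (V : Finset (Fin n)) (v0 : Fin n) (hv0 : v0 ∈ V) :
    (Finset.univ.filter (fun c : Fin n → Fin q => ∀ v ∈ V, c v = c v0)).card
      = q ^ (n - V.card + 1) := by
  classical
  have E : {c : Fin n → Fin q // ∀ v ∈ V, c v = c v0} ≃
      (Fin q × ({v : Fin n // v ∉ V} → Fin q)) :=
    { toFun := fun c => (c.1 v0, fun v => c.1 v.1)
      invFun := fun p => ⟨fun v => if h : v ∈ V then p.1 else p.2 ⟨v, h⟩, by
        intro v hv; simp [hv, hv0]⟩
      left_inv := fun c => by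
        apply Subtype.ext; funext v
        by_cases h : v ∈ V
        · simp only [dif_pos h]; exact (c.2 v h).symm
        · simp only [dif_neg h]
      right_inv := fun p => by
        refine Prod.ext ?_ ?_
        · simp [hv0]
        · funext v; simp [v.2] }
  have h1 : (Finset.univ.filter (fun c : Fin n → Fin q => ∀ v ∈ V, c v = c v0)).card
      = Fintype.card {c : Fin n → Fin q // ∀ v ∈ V, c v = c v0} :=
    (Fintype.card_subtype _).symm
  rw [h1, Fintype.card_congr E, Fintype.card_prod, Fintype.card_fun,
    Fintype.card_subtype_compl, Fintype.card_fin, Fintype.card_coe, Fintype.card_fin,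
    pow_succ]
  ring


set_option maxHeartbeats 1000000 in
/-- For `n, q ≥ 1` and a nonempty connected edge set `α`,
`E_{Y ∼ MC(n,q)}[∏_{e ∈ α} Y_e] = q^{1 − |V(α)|}`. -/
theorem stmt11 (n q : ℕ) (hn : 1 ≤ n) (hq : 1 ≤ q) (α : Finset (Edge n))
    (hne : α.Nonempty) (hconn : ConnectedEdges α) :
    mcExp n q (fun Y => ∏ e ∈ α, Y e) = (q : ℝ) ^ ((1 : ℤ) - ((vertexSet α).card : ℤ)) := by
  classical
  obtain ⟨e0, he0⟩ := hne
  set V := vertexSet α with hVdef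
  have hv0 : e0.val.1 ∈ V := by
    simp only [hVdef, vertexSet, Finset.mem_biUnion]
    exact ⟨e0, he0, by simp⟩
  set v0 := e0.val.1
  set k := V.card with hk
  have hkn : k ≤ n := by
    calc k ≤ Fintype.card (Fin n) := Finset.card_le_univ V
    _ = n := Fintype.card_fin n
  set E := Fintype.card (Edge n) with hE
  -- predicate equivalence
  have hwalk : ∀ c : Fin n → Fin q, (∀ e ∈ α, c e.val.1 = c e.val.2) →
      ∀ u w : Fin n, Relation.ReflTransGen (edgeAdj α) u w → c u = c w := by
    intro c h u w hrel
    induction hrel with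
    | refl => rfl
    | tail _ hadj ih =>
      obtain ⟨e, he, h1 | h1⟩ := hadj
      · rw [ih, ← h1.1, ← h1.2, h e he]
      · rw [ih, ← h1.1, ← h1.2, h e he]
  have hpred : ∀ c : Fin n → Fin q,
      (∀ e ∈ α, c e.val.1 = c e.val.2) ↔ (∀ v ∈ V, c v = c v0) := by
    intro c
    constructor
    · intro h v hv
      exact hwalk c h v v0 (hconn v hv v0 hv0)
    · intro h e he
      have h1 : e.val.1 ∈ V := by
        simp only [hVdef, vertexSet, Finset.mem_biUnion]; exact ⟨e, he, by simp⟩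
      have h2 : e.val.2 ∈ V := by
        simp only [hVdef, vertexSet, Finset.mem_biUnion]; exact ⟨e, he, by simp⟩
      rw [h _ h1, h _ h2]
  -- inner sum over signs, for fixed coloring
  have step1 : ∀ c : Fin n → Fin q,
      (∑ s : Edge n → Bool, ∏ e ∈ α, mcY (c, s) e)
        = if (∀ v ∈ V, c v = c v0) then (2:ℝ)^E else 0 := by
    intro c
    set F : Edge n → Bool → ℝ := fun e b =>
      if e ∈ α then (if c e.val.1 = c e.val.2 then (1:ℝ) else if b then 1 else -1) else 1
      with hF
    have hG : ∀ s : Edge n → Bool, (∏ e ∈ α, mcY (c, s) e) = ∏ e : Edge n, F e (s e) := by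
      intro s
      simp only [hF]
      rw [Finset.prod_ite_mem, Finset.univ_inter]
      exact Finset.prod_congr rfl fun e _ => rfl
    have h2 : (∑ s : Edge n → Bool, ∏ e : Edge n, F e (s e)) = ∏ e : Edge n, ∑ b : Bool, F e b := by
      have h := Finset.prod_univ_sum (fun _ : Edge n => (Finset.univ : Finset Bool)) F
      rw [Fintype.piFinset_univ] at h
      exact h.symm
    have h3 : ∀ e : Edge n, (∑ b : Bool, F e b)
        = if e ∈ α then (if c e.val.1 = c e.val.2 then (2:ℝ) else 0) else 2 := by
      intro e
      by_cases h1 : e ∈ α <;> by_cases hsame : c e.val.1 = c e.val.2 <;>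
        simp [hF, h1, hsame, Fintype.sum_bool] <;> norm_num
    calc (∑ s : Edge n → Bool, ∏ e ∈ α, mcY (c, s) e)
        = ∑ s : Edge n → Bool, ∏ e : Edge n, F e (s e) :=
          Finset.sum_congr rfl fun s _ => hG s
      _ = ∏ e : Edge n, ∑ b : Bool, F e b := h2
      _ = ∏ e : Edge n, (if e ∈ α then
              (if c e.val.1 = c e.val.2 then (2:ℝ) else 0) else 2) :=
          Finset.prod_congr rfl fun e _ => h3 e
      _ = (∏ e ∈ α, (if c e.val.1 = c e.val.2 then (2:ℝ) else 0)) *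
            ∏ e ∈ Finset.univ.filter (fun e => e ∉ α), (2:ℝ) := by
          rw [Finset.prod_ite]
          congr 1
          apply Finset.prod_congr _ fun _ _ => rfl
          ext e; simp
      _ = (if (∀ v ∈ V, c v = c v0) then (2:ℝ)^E else 0) := by
          rw [Finset.prod_const]
          by_cases h : ∀ e ∈ α, c e.val.1 = c e.val.2
          · rw [if_pos ((hpred c).1 h)]
            have hprod : (∏ e ∈ α, (if c e.val.1 = c e.val.2 then (2:ℝ) else 0))
                = 2 ^ α.card := by
              rw [Finset.prod_congr rfl fun e he => if_pos (h e he), Finset.prod_const]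
            rw [hprod, ← pow_add]
            congr 1
            have hcompl : Finset.univ.filter (fun e => e ∉ α) = αᶜ := by
              ext e; simp
            rw [hcompl, Finset.card_compl]
            have hle : α.card ≤ E := le_of_le_of_eq (Finset.card_le_univ α) Finset.card_univ
            omega
          · rw [if_neg (fun hc => h ((hpred c).2 hc))]
            push_neg at h
            obtain ⟨e, he, hnee⟩ := h
            have hz : (∏ e ∈ α, if c e.val.1 = c e.val.2 then (2:ℝ) else 0) = 0 :=
              Finset.prod_eq_zero he (if_neg hnee)
            rw [hz, zero_mul]
  -- total sum
  have hsum : (∑ ω : MCSpace n q, ∏ e ∈ α, mcY ω e)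
      = (q:ℝ) ^ (n - k + 1) * (2:ℝ)^E := by
    rw [Fintype.sum_prod_type]
    calc (∑ c : Fin n → Fin q, ∑ s : Edge n → Bool, ∏ e ∈ α, mcY (c, s) e)
        = ∑ c : Fin n → Fin q, if (∀ v ∈ V, c v = c v0) then (2:ℝ)^E else 0 :=
          Finset.sum_congr rfl fun c _ => step1 c
      _ = ((Finset.univ.filter (fun c : Fin n → Fin q => ∀ v ∈ V, c v = c v0)).card : ℝ)
            * (2:ℝ)^E := by
          rw [Finset.sum_ite, Finset.sum_const, Finset.sum_const_zero, add_zero,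
            nsmul_eq_mul]
      _ = (q:ℝ) ^ (n - k + 1) * (2:ℝ)^E := by
          rw [count_const n q V v0 hv0]
          push_cast
          rfl
  have hcard : (Fintype.card (MCSpace n q) : ℝ) = (q:ℝ)^n * (2:ℝ)^E := by
    rw [Fintype.card_prod, Fintype.card_fun, Fintype.card_fun, Fintype.card_fin,
      Fintype.card_fin, Fintype.card_bool]
    push_cast
    rfl
  have hq0 : (q:ℝ) ≠ 0 := by positivity
  have h20 : (2:ℝ)^E ≠ 0 := by positivity
  rw [mcExp, hsum, hcard]
  have hexp : (1 : ℤ) - (k : ℤ) = ((n - k + 1 : ℕ) : ℤ) - (n : ℤ) := by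
    push_cast [Nat.cast_sub hkn]
    ring
  rw [hexp, zpow_sub₀ hq0, zpow_natCast, zpow_natCast]
  field_simp
end

section
/- Let n ≥ 1, q ≥ 1, ℓ ≥ 1 be integers and let α be a nonempty connected set of unordered pairs of distinct elements of {1,…,n} (the graph with edge set α on its vertex support V(α) is connected). Then 0 ≤ E_{Y ∼ MC(n,q)}[∏_{e ∈ α} Y_e] − E_{Y ∼ MC(n,q+ℓ)}[∏_{e ∈ α} Y_e] ≤ ℓ·(|V(α)| − 1)/q^{|V(α)|}. -/
open Finset

lemma sumSigns (n q : ℕ) (α : Finset (Edge n)) (c : Fin n → Fin q) :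
    ∑ s : Edge n → Bool, ∏ e ∈ α, mcY (c, s) e =
    (if ∀ e ∈ α, c e.val.1 = c e.val.2 then (2:ℝ)^(Fintype.card (Edge n)) else 0) := by
  classical
  have h1 : ∀ s : Edge n → Bool, ∏ e ∈ α, mcY (c, s) e =
      ∏ e : Edge n, (if e ∈ α then mcY (c, s) e else 1) := by
    intro s
    rw [Finset.prod_ite_mem, Finset.univ_inter]
  simp only [h1]
  have h2 : ∑ s : Edge n → Bool, ∏ e : Edge n, (if e ∈ α then mcY (c, s) e else 1) =
      ∏ e : Edge n, ∑ b : Bool, (if e ∈ α then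
        (if c e.val.1 = c e.val.2 then (1:ℝ) else if b then 1 else -1) else 1) := by
    rw [Fintype.prod_sum]
    rfl
  rw [h2]
  have h3 : ∀ e : Edge n, (∑ b : Bool, (if e ∈ α then
      (if c e.val.1 = c e.val.2 then (1:ℝ) else if b then 1 else -1) else 1)) =
      if e ∈ α then (if c e.val.1 = c e.val.2 then 2 else 0) else 2 := by
    intro e
    by_cases he : e ∈ α <;> by_cases hm : c e.val.1 = c e.val.2 <;> simp [he, hm] <;> norm_num
  simp only [h3]
  by_cases hall : ∀ e ∈ α, c e.val.1 = c e.val.2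
  · rw [if_pos hall]
    have : ∀ e : Edge n, (if e ∈ α then (if c e.val.1 = c e.val.2 then (2:ℝ) else 0) else 2) = 2 := by
      intro e
      by_cases he : e ∈ α
      · simp [he, hall e he]
      · simp [he]
    simp only [this]
    simp [Finset.prod_const]
  · rw [if_neg hall]
    push_neg at hall
    obtain ⟨e₀, he₀, hm⟩ := hall
    exact Finset.prod_eq_zero (Finset.mem_univ e₀) (by simp [he₀, hm])

lemma monoIff {n q : ℕ} (α : Finset (Edge n)) (hconn : ConnectedEdges α) (c : Fin n → Fin q) :
    (∀ e ∈ α, c e.val.1 = c e.val.2) ↔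
    (∀ u ∈ vertexSet α, ∀ v ∈ vertexSet α, c u = c v) := by
  constructor
  · intro hmono u hu v hv
    have key : ∀ {x y : Fin n}, Relation.ReflTransGen (edgeAdj α) x y → c x = c y := by
      intro x y h
      induction h with
      | refl => rfl
      | tail _ hadj ih =>
        obtain ⟨e, he, h'⟩ := hadj
        rcases h' with ⟨h1, h2⟩ | ⟨h1, h2⟩
        · rw [ih, ← h1, ← h2, hmono e he]
        · rw [ih, ← h1, ← h2, hmono e he]
    exact key (hconn u hu v hv)
  · intro hconst e he
    have h1 : e.val.1 ∈ vertexSet α := Finset.mem_biUnion.2 ⟨e, he, by simp⟩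
    have h2 : e.val.2 ∈ vertexSet α := Finset.mem_biUnion.2 ⟨e, he, by simp⟩
    exact hconst _ h1 _ h2


lemma countConst (n q : ℕ) (S : Finset (Fin n)) (hS : S.Nonempty) :
    ∑ c : Fin n → Fin q, (if ∀ u ∈ S, ∀ v ∈ S, c u = c v then (1:ℝ) else 0) =
    (q:ℝ) ^ (n - S.card) * q := by
  classical
  obtain ⟨u₀, hu₀⟩ := hS
  have key : ∀ c : Fin n → Fin q,
      (if ∀ u ∈ S, ∀ v ∈ S, c u = c v then (1:ℝ) else 0) =
      ∑ a : Fin q, ∏ v ∈ S, (if c v = a then (1:ℝ) else 0) := by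
    intro c
    simp only [Finset.prod_boole]
    by_cases hc : ∀ u ∈ S, ∀ v ∈ S, c u = c v
    · rw [if_pos hc]
      have hiff : ∀ a : Fin q, (∀ v ∈ S, c v = a) ↔ a = c u₀ := by
        intro a
        constructor
        · intro h; rw [← h u₀ hu₀]
        · rintro rfl v hv; exact hc v hv u₀ hu₀
      symm
      calc _ = ∑ a : Fin q, if a = c u₀ then (1:ℝ) else 0 := by
            refine Finset.sum_congr rfl fun a _ => ?_
            simp only [hiff a]
        _ = 1 := by
            rw [Finset.sum_ite_eq' univ (c u₀) (fun _ => (1:ℝ))]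
            simp
    · rw [if_neg hc]
      symm
      refine Finset.sum_eq_zero fun a _ => ?_
      rw [if_neg]
      intro h
      exact hc fun u hu v hv => by rw [h u hu, h v hv]
  simp only [key]
  rw [Finset.sum_comm]
  have inner : ∀ a : Fin q, (∑ c : Fin n → Fin q, ∏ v ∈ S, (if c v = a then (1:ℝ) else 0)) =
      (q:ℝ) ^ (n - S.card) := by
    intro a
    have h1 : ∀ c : Fin n → Fin q, ∏ v ∈ S, (if c v = a then (1:ℝ) else 0) =
        ∏ v : Fin n, (if v ∈ S then (if c v = a then (1:ℝ) else 0) else 1) := by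
      intro c; rw [Finset.prod_ite_mem, Finset.univ_inter]
    simp only [h1]
    have h2 : ∑ c : Fin n → Fin q, ∏ v : Fin n, (if v ∈ S then (if c v = a then (1:ℝ) else 0) else 1)
        = ∏ v : Fin n, ∑ b : Fin q, (if v ∈ S then (if b = a then (1:ℝ) else 0) else 1) := by
      rw [Fintype.prod_sum]
    rw [h2]
    have h3 : ∀ v : Fin n, (∑ b : Fin q, (if v ∈ S then (if b = a then (1:ℝ) else 0) else 1)) =
        if v ∈ S then 1 else (q:ℝ) := by
      intro v
      by_cases hv : v ∈ S
      · simp [hv, Finset.sum_ite_eq' univ a (fun _ => (1:ℝ))]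
      · simp [hv]
    simp only [h3]
    have h4 : (∏ v : Fin n, if v ∈ S then (1:ℝ) else q) =
        ∏ v : Fin n, (if v ∈ Sᶜ then (q:ℝ) else 1) := by
      refine Finset.prod_congr rfl fun v _ => ?_
      by_cases hv : v ∈ S <;> simp [hv]
    rw [h4, Finset.prod_ite_mem, Finset.univ_inter, Finset.prod_const, Finset.card_compl]
    simp
  simp only [inner]
  rw [Finset.sum_const]
  simp [mul_comm]

lemma mcExp_prod (n q : ℕ) (hq : 1 ≤ q) (α : Finset (Edge n)) (hne : α.Nonempty)
    (hconn : ConnectedEdges α) :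
    mcExp n q (fun Y => ∏ e ∈ α, Y e) = (q:ℝ) / (q:ℝ) ^ (vertexSet α).card := by
  classical
  have hSne : (vertexSet α).Nonempty := by
    obtain ⟨e, he⟩ := hne
    exact ⟨e.val.1, Finset.mem_biUnion.2 ⟨e, he, by simp⟩⟩
  have hkn : (vertexSet α).card ≤ n := by
    simpa using Finset.card_le_card (Finset.subset_univ (vertexSet α))
  rw [mcExp]
  rw [Fintype.sum_prod_type]
  have step : ∀ c : Fin n → Fin q, (∑ s : Edge n → Bool, ∏ e ∈ α, mcY (c, s) e) =
      (if ∀ u ∈ vertexSet α, ∀ v ∈ vertexSet α, c u = c v then (1:ℝ) else 0) *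
        (2:ℝ)^(Fintype.card (Edge n)) := by
    intro c
    rw [sumSigns]
    by_cases h : ∀ u ∈ vertexSet α, ∀ v ∈ vertexSet α, c u = c v
    · rw [if_pos ((monoIff α hconn c).2 h), if_pos h, one_mul]
    · rw [if_neg (fun hm => h ((monoIff α hconn c).1 hm)), if_neg h, zero_mul]
  simp only [step]
  rw [← Finset.sum_mul, countConst n q _ hSne]
  have hcard : (Fintype.card (MCSpace n q) : ℝ) = (q:ℝ)^n * 2^(Fintype.card (Edge n)) := by
    simp [Fintype.card_prod, Fintype.card_fun]
  rw [hcard]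
  have hq0 : (0:ℝ) < (q:ℝ) := by exact_mod_cast hq
  have h2 : (0:ℝ) < (2:ℝ)^(Fintype.card (Edge n)) := by positivity
  set k := (vertexSet α).card
  have hpow : (q:ℝ)^(n-k) * (q:ℝ)^k = (q:ℝ)^n := by
    rw [← pow_add, Nat.sub_add_cancel hkn]
  rw [div_eq_div_iff (by positivity) (by positivity), ← hpow]
  ring


lemma pow_diff_le (a b : ℝ) (hb : 0 ≤ b) (hab : b ≤ a) :
    ∀ m : ℕ, a ^ m - b ^ m ≤ m * (a - b) * a ^ (m - 1) := by
  intro m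
  induction m with
  | zero => simp
  | succ m ih =>
    have ha : 0 ≤ a := le_trans hb hab
    have hpw : ∀ j : ℕ, b ^ j ≤ a ^ j := fun j => pow_le_pow_left₀ hb hab j
    cases m with
    | zero => norm_num
    | succ m' =>
      have hm : m' + 1 - 1 = m' := rfl
      rw [hm] at ih
      have h3 : a * (a^(m'+1) - b^(m'+1)) ≤ a * (((m'+1:ℕ):ℝ) * (a - b) * a^m') :=
        mul_le_mul_of_nonneg_left ih ha
      have h2 : (a - b) * b^(m'+1) ≤ (a - b) * a^(m'+1) :=
        mul_le_mul_of_nonneg_left (hpw (m'+1)) (by linarith)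
      have key : a^(m'+1+1) - b^(m'+1+1) ≤ (((m'+1:ℕ):ℝ)+1) * (a - b) * a^(m'+1) := by
        have e1 : a^(m'+1+1) - b^(m'+1+1)
            = a * (a^(m'+1) - b^(m'+1)) + (a - b) * b^(m'+1) := by ring
        have e2 : a * (((m'+1:ℕ):ℝ) * (a - b) * a^m') + (a - b) * a^(m'+1)
            = (((m'+1:ℕ):ℝ)+1) * (a - b) * a^(m'+1) := by ring
        linarith
      have hc : ((m'+1+1:ℕ):ℝ) = ((m'+1:ℕ):ℝ)+1 := by push_cast; ring
      simpa [Nat.add_sub_cancel, hc] using key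

/-- For `n, q, ℓ ≥ 1` and a nonempty connected edge set `α`,
`0 ≤ E_{MC(n,q)}[∏_{e∈α} Y_e] − E_{MC(n,q+ℓ)}[∏_{e∈α} Y_e] ≤ ℓ·(|V(α)|−1)/q^{|V(α)|}`. -/
theorem stmt12 (n q ℓ : ℕ) (hn : 1 ≤ n) (hq : 1 ≤ q) (hℓ : 1 ≤ ℓ) (α : Finset (Edge n))
    (hne : α.Nonempty) (hconn : ConnectedEdges α) :
    0 ≤ mcExp n q (fun Y => ∏ e ∈ α, Y e) - mcExp n (q + ℓ) (fun Y => ∏ e ∈ α, Y e) ∧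
    mcExp n q (fun Y => ∏ e ∈ α, Y e) - mcExp n (q + ℓ) (fun Y => ∏ e ∈ α, Y e) ≤
      (ℓ : ℝ) * (((vertexSet α).card : ℝ) - 1) / (q : ℝ) ^ (vertexSet α).card := by
  classical
  have hk2 : 2 ≤ (vertexSet α).card := by
    obtain ⟨e, he⟩ := hne
    refine Finset.one_lt_card.2 ⟨e.val.1, ?_, e.val.2, ?_, ne_of_lt e.prop⟩
    · exact Finset.mem_biUnion.2 ⟨e, he, by simp⟩
    · exact Finset.mem_biUnion.2 ⟨e, he, by simp⟩
  obtain ⟨j, hj⟩ : ∃ j, (vertexSet α).card = j + 2 := ⟨(vertexSet α).card - 2, by omega⟩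
  set B : ℝ := (q : ℝ) with hB
  set A : ℝ := ((q + ℓ : ℕ) : ℝ) with hA
  have hB1 : (1:ℝ) ≤ B := by rw [hB]; exact_mod_cast hq
  have hB0 : (0:ℝ) < B := by linarith
  have hAB : A - B = (ℓ:ℝ) := by rw [hA, hB]; push_cast; ring
  have hℓ1 : (1:ℝ) ≤ (ℓ:ℝ) := by exact_mod_cast hℓ
  have hBA : B ≤ A := by linarith
  have hA0 : (0:ℝ) < A := by linarith
  rw [mcExp_prod n q hq α hne hconn,
      mcExp_prod n (q + ℓ) (by omega) α hne hconn, hj]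
  have eB : B / B ^ (j + 2) = 1 / B ^ (j + 1) := by
    rw [pow_succ]
    rw [div_eq_div_iff (by positivity) (by positivity)]
    ring
  have eA : A / A ^ (j + 2) = 1 / A ^ (j + 1) := by
    rw [pow_succ]
    rw [div_eq_div_iff (by positivity) (by positivity)]
    ring
  rw [eB, eA]
  constructor
  · have h1 : B ^ (j+1) ≤ A ^ (j+1) := pow_le_pow_left₀ hB0.le hBA _
    have h2 : 1 / A ^ (j+1) ≤ 1 / B ^ (j+1) :=
      one_div_le_one_div_of_le (by positivity) h1
    linarith
  · have hcast : (((j + 2 : ℕ)):ℝ) - 1 = (j:ℝ) + 1 := by push_cast; ring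
    rw [hcast]
    have hd : A ^ (j+1) - B ^ (j+1) ≤ ((j:ℝ)+1) * (ℓ:ℝ) * A ^ j := by
      have h := pow_diff_le A B hB0.le hBA (j+1)
      rw [hAB] at h
      simp only [Nat.add_sub_cancel] at h
      push_cast at h
      linarith
    have e : 1 / B ^ (j+1) - 1 / A ^ (j+1) =
        (A ^ (j+1) - B ^ (j+1)) / (B ^ (j+1) * A ^ (j+1)) := by
      field_simp
    rw [e, div_le_div_iff₀ (by positivity) (by positivity)]
    calc (A ^ (j+1) - B ^ (j+1)) * B ^ (j+2)
        ≤ (((j:ℝ)+1) * (ℓ:ℝ) * A ^ j) * B ^ (j+2) :=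
          mul_le_mul_of_nonneg_right hd (by positivity)
      _ = (((j:ℝ)+1) * (ℓ:ℝ) * (A ^ j * B ^ (j+1))) * B := by ring
      _ ≤ (((j:ℝ)+1) * (ℓ:ℝ) * (A ^ j * B ^ (j+1))) * A := by
          apply mul_le_mul_of_nonneg_left hBA (by positivity)
      _ = (ℓ:ℝ) * ((j:ℝ)+1) * (B ^ (j+1) * A ^ (j+1)) := by ring
end

section
/- Fix real constants δ > 0 and C > 0. Let D : ℕ → ℕ be a sequence with D(n)·(log log n / log n)² → 0 as n → ∞. Suppose for each n, φ_n assigns a real number to each set α of unordered pairs of distinct elements of {1,…,n}, such that |φ_n(α)| ≤ n^{−(1+δ)·|V(α)|/2} · (|α|+1)^{C·|α|} for every α with 1 ≤ |α| ≤ D(n). Then Σ_{α : 1 ≤ |α| ≤ D(n)} φ_n(α)² → 0 as n → ∞. -/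
open Finset

/-!
For `|α| = k` we have `|α| ≤ |V(α)|²` and `|V(α)| ≥ 2`, so `|V(α)| ≥ 1 + √k / 2`, and the
hypothesis gives `φ_n(α)² ≤ n^{-δ} · n^{-(δ/2)√k} · (k+1)^{2Ck} · n^{-|V(α)|}`.
Group the `α` with `|α| = k` by `V = V(α)`: then `|V| ≤ 2k`, each `V` carries at most `(2k)^{2k}`
such `α`, and `∑_{|V| ≤ 2k} n^{-|V|} ≤ ∑_{j ≤ 2k} C(n,j) n^{-j} ≤ 2k + 1`.
Hence the terms with `|α| = k` contribute at most `n^{-δ} · n^{-(δ/2)√k} · (2k+2)^{(2C+3)k}`.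
The hypothesis on `D` gives `√D(n) · log D(n) = o(log n)`, so this is at most `n^{-δ}` for all
`k ≤ D(n)` once `n` is large, and the whole sum is at most `D(n) n^{-δ} ≤ (log n)² n^{-δ} → 0`.
-/

open Real Filter

lemma add_one_rpow_mul_le_two_mul_add_two_rpow {C : ℝ} (hC : 0 ≤ C) {k : ℕ} (hk : 1 ≤ k) :
    ((k : ℝ) + 1) ^ (2 * C * k) * ((2 * k + 1) * (2 * k) ^ (2 * k))
      ≤ (2 * k + 2) ^ ((2 * C + 3) * k) := by
  have hk' : (1 : ℝ) ≤ k := by exact_mod_cast hk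
  calc _ ≤ ((2 : ℝ) * k + 2) ^ (2 * C * k) * ((2 * k + 2) * (2 * k + 2) ^ (2 * k)) := by
        gcongr <;> linarith
    _ = (2 * k + 2) ^ (2 * C * k + 1 + ((2 * k : ℕ) : ℝ)) := by
        rw [rpow_add_natCast (by positivity), rpow_add_one (by positivity)]; ring
    _ ≤ _ := rpow_le_rpow_of_exponent_le (by linarith) (by push_cast; nlinarith)

lemma rpow_mul_le_rpow_mul_sqrt {a b c d t : ℝ} (ha : 0 < a) (hb : 0 < b)
    (ht : 0 ≤ t) (h : c * (√t * log a) ≤ d * log b) : a ^ (c * t) ≤ b ^ (d * √t) := by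
  rw [rpow_def_of_pos ha, rpow_def_of_pos hb, exp_le_exp]
  have hsq := mul_self_sqrt ht
  calc log a * (c * t) = √t * (c * (√t * log a)) := by linear_combination (-(c * log a)) * hsq
    _ ≤ √t * (d * log b) := mul_le_mul_of_nonneg_left h (sqrt_nonneg t)
    _ = _ := by ring

lemma sq_le_of_abs_le_rpow {x a b c v s δ : ℝ} (ha : 1 ≤ a) (hb : 0 ≤ b) (hδ : 0 ≤ δ)
    (hv : 1 + s / 2 ≤ v) (hx : |x| ≤ a ^ (-(1 + δ) * v / 2) * b ^ c) :
    x ^ 2 ≤ a ^ (-δ) * (a ^ (-(δ / 2 * s)) * b ^ (2 * c)) * a ^ (-v) := by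
  have ha0 : 0 < a := zero_lt_one.trans_le ha
  calc x ^ 2 ≤ (a ^ (-(1 + δ) * v / 2) * b ^ c) ^ 2 := by
        rw [← sq_abs]; exact pow_le_pow_left₀ (abs_nonneg x) hx 2
    _ = a ^ (-(1 + δ) * v) * b ^ (2 * c) := by
        rw [mul_pow, ← rpow_mul_natCast ha0.le, ← rpow_mul_natCast hb]; ring_nf
    _ ≤ a ^ (-δ + -(δ / 2 * s) + -v) * b ^ (2 * c) := by
        exact mul_le_mul_of_nonneg_right (rpow_le_rpow_of_exponent_le ha (by nlinarith))
          (by positivity)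
    _ = _ := by rw [rpow_add ha0, rpow_add ha0]; ring

section

variable {n : ℕ}

lemma pair_subset_vertexSet {α : Finset (Edge n)} {e : Edge n} (he : e ∈ α) :
    {e.val.1, e.val.2} ⊆ vertexSet α :=
  subset_biUnion_of_mem (fun e : Edge n => ({e.val.1, e.val.2} : Finset (Fin n))) he

lemma two_le_card_vertexSet {α : Finset (Edge n)} (hα : α.Nonempty) :
    2 ≤ #(vertexSet α) := by
  obtain ⟨e, he⟩ := hα
  calc 2 = #{e.val.1, e.val.2} := (card_pair e.2.ne).symm
    _ ≤ #(vertexSet α) := card_le_card (pair_subset_vertexSet he)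

lemma card_vertexSet_le (α : Finset (Edge n)) : #(vertexSet α) ≤ 2 * #α := by
  calc #(vertexSet α) ≤ ∑ e ∈ α, #{e.val.1, e.val.2} := card_biUnion_le
    _ ≤ ∑ _e ∈ α, 2 := sum_le_sum fun e _ => card_le_two
    _ = 2 * #α := by rw [sum_const, smul_eq_mul, mul_comm]

def edgesIn (V : Finset (Fin n)) : Finset (Edge n) :=
  {e | e.val.1 ∈ V ∧ e.val.2 ∈ V}

lemma card_edgesIn_le (V : Finset (Fin n)) : #(edgesIn V) ≤ #V ^ 2 := by
  rw [sq, ← card_product]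
  exact card_le_card_of_injOn Subtype.val (fun e he => mem_product.2 (mem_filter.1 he).2)
    Subtype.val_injective.injOn

lemma subset_edgesIn_vertexSet (α : Finset (Edge n)) : α ⊆ edgesIn (vertexSet α) := fun e he =>
  mem_filter.2 ⟨mem_univ _, pair_subset_vertexSet he (by simp), pair_subset_vertexSet he (by simp)⟩

lemma card_le_sq_card_vertexSet (α : Finset (Edge n)) : #α ≤ #(vertexSet α) ^ 2 :=
  (card_le_card (subset_edgesIn_vertexSet α)).trans (card_edgesIn_le _)

lemma one_add_sqrt_card_div_two_le {α : Finset (Edge n)} (hα : α.Nonempty) :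
    1 + √(#α : ℝ) / 2 ≤ #(vertexSet α) := by
  have h2 : (2 : ℝ) ≤ #(vertexSet α) := by exact_mod_cast two_le_card_vertexSet hα
  have hsqrt : √(#α : ℝ) ≤ #(vertexSet α) :=
    Real.sqrt_le_iff.2 ⟨by positivity, by exact_mod_cast card_le_sq_card_vertexSet α⟩
  linarith

lemma card_filter_vertexSet_eq_le (k : ℕ) (V : Finset (Fin n)) :
    #{α : Finset (Edge n) | #α = k ∧ vertexSet α = V} ≤ (#V ^ 2) ^ k := by
  calc _ ≤ #((edgesIn V).powersetCard k) := card_le_card fun α hα => by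
          obtain ⟨hk, rfl⟩ := (mem_filter.1 hα).2
          exact mem_powersetCard.2 ⟨subset_edgesIn_vertexSet α, hk⟩
    _ = (#(edgesIn V)).choose k := card_powersetCard _ _
    _ ≤ #(edgesIn V) ^ k := Nat.choose_le_pow _ _
    _ ≤ (#V ^ 2) ^ k := Nat.pow_le_pow_left (card_edgesIn_le V) k

lemma sum_inv_pow_card_le (m : ℕ) :
    ∑ V : Finset (Fin n) with #V ≤ m, ((n : ℝ) ^ #V)⁻¹ ≤ m + 1 := by
  rw [sum_filter, ← powerset_univ,
    sum_powerset_apply_card (fun j => if j ≤ m then ((n : ℝ) ^ j)⁻¹ else 0), card_univ,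
    Fintype.card_fin]
  simp_rw [smul_ite, smul_zero]
  rw [← sum_filter]
  calc _ ≤ ∑ j ∈ range (n + 1) with j ≤ m, (1 : ℝ) := sum_le_sum fun j _ => by
          rw [nsmul_eq_mul, ← div_eq_mul_inv]
          exact div_le_one_of_le₀ (by exact_mod_cast Nat.choose_le_pow n j) (by positivity)
    _ ≤ ∑ j ∈ range (m + 1), (1 : ℝ) := sum_le_sum_of_subset_of_nonneg
          (fun j hj => mem_range_succ_iff.2 (mem_filter.1 hj).2) fun _ _ _ => zero_le_one
    _ = m + 1 := by simp

lemma sum_inv_pow_card_vertexSet_le (k : ℕ) :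
    ∑ α : Finset (Edge n) with #α = k, ((n : ℝ) ^ #(vertexSet α))⁻¹
      ≤ (2 * k + 1) * (2 * k) ^ (2 * k) := by
  have hmaps : ∀ α ∈ ({α | #α = k} : Finset (Finset (Edge n))),
      vertexSet α ∈ ({V | #V ≤ 2 * k} : Finset (Finset (Fin n))) := fun α hα =>
    mem_filter.2 ⟨mem_univ _, (mem_filter.1 hα).2 ▸ card_vertexSet_le α⟩
  rw [← sum_fiberwise_of_maps_to hmaps]
  calc _ ≤ ∑ V : Finset (Fin n) with #V ≤ 2 * k, ((2 * k : ℝ) ^ (2 * k)) * ((n : ℝ) ^ #V)⁻¹ := by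
        refine sum_le_sum fun V hV => ?_
        rw [sum_congr rfl fun α hα => by rw [(mem_filter.1 hα).2], sum_const, nsmul_eq_mul,
          filter_filter]
        gcongr
        calc (_ : ℝ) ≤ (((2 * k) ^ 2) ^ k : ℕ) := by
              exact_mod_cast (card_filter_vertexSet_eq_le k V).trans
                (Nat.pow_le_pow_left (Nat.pow_le_pow_left (mem_filter.1 hV).2 2) k)
          _ = _ := by push_cast; rw [← pow_mul]
    _ ≤ (2 * k) ^ (2 * k) * (2 * k + 1) := by
        rw [← mul_sum]; gcongr; exact_mod_cast sum_inv_pow_card_le (2 * k)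
    _ = _ := mul_comm _ _

lemma sum_sq_filter_card_eq_le {δ C : ℝ} (hδ : 0 ≤ δ) {k : ℕ} (hk : 1 ≤ k) (hn : 1 ≤ n)
    (φ : Finset (Edge n) → ℝ)
    (hφ : ∀ α : Finset (Edge n), #α = k →
      |φ α| ≤ (n : ℝ) ^ (-(1 + δ) * (#(vertexSet α) : ℝ) / 2) * ((#α : ℝ) + 1) ^ (C * #α)) :
    ∑ α : Finset (Edge n) with #α = k, φ α ^ 2 ≤ (n : ℝ) ^ (-δ) *
      ((n : ℝ) ^ (-(δ / 2 * √k)) *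
        ((k + 1) ^ (2 * C * k) * ((2 * k + 1) * (2 * k) ^ (2 * k)))) := by
  have hn' : (1 : ℝ) ≤ n := by exact_mod_cast hn
  calc _ ≤ ∑ α : Finset (Edge n) with #α = k, (n : ℝ) ^ (-δ) *
        ((n : ℝ) ^ (-(δ / 2 * √k)) * ((k : ℝ) + 1) ^ (2 * C * k)) *
          ((n : ℝ) ^ #(vertexSet α))⁻¹ := by
        refine sum_le_sum fun α hα => ?_
        have hcard : #α = k := (mem_filter.1 hα).2
        have hne : α.Nonempty := card_pos.1 (hcard ▸ hk)
        rw [← rpow_natCast (n : ℝ) #(vertexSet α), ← rpow_neg (by positivity)]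
        have hbound := sq_le_of_abs_le_rpow hn' (by positivity) hδ
          (one_add_sqrt_card_div_two_le hne) (hφ α hcard)
        simpa only [hcard, mul_assoc] using hbound
    _ ≤ _ := by
        rw [← mul_sum, mul_assoc, mul_assoc]
        gcongr
        exact sum_inv_pow_card_vertexSet_le k

lemma sum_sq_filter_card_mem_Icc_le {δ C : ℝ} (hδ : 0 ≤ δ) (hC : 0 ≤ C) {K : ℕ} (hn : 1 ≤ n)
    (hK : (2 * C + 3) * (√K * log (2 * K + 2)) ≤ δ / 2 * log n) (φ : Finset (Edge n) → ℝ)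
    (hφ : ∀ α : Finset (Edge n), 1 ≤ #α → #α ≤ K →
      |φ α| ≤ (n : ℝ) ^ (-(1 + δ) * (#(vertexSet α) : ℝ) / 2) * ((#α : ℝ) + 1) ^ (C * #α)) :
    ∑ α : Finset (Edge n) with 1 ≤ #α ∧ #α ≤ K, φ α ^ 2 ≤ K * (n : ℝ) ^ (-δ) := by
  have hn0 : (0 : ℝ) < n := by exact_mod_cast hn
  have hmaps : ∀ α ∈ ({α | 1 ≤ #α ∧ #α ≤ K} : Finset (Finset (Edge n))), #α ∈ Icc 1 K :=
    fun α hα => mem_Icc.2 (mem_filter.1 hα).2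
  rw [← sum_fiberwise_of_maps_to hmaps]
  calc _ ≤ ∑ _k ∈ Icc 1 K, (n : ℝ) ^ (-δ) := sum_le_sum fun k hk => ?_
    _ = _ := by simp
  obtain ⟨hk1, hkK⟩ := mem_Icc.1 hk
  rw [filter_filter, filter_congr fun α _ => and_iff_right_of_imp fun h => ⟨h ▸ hk1, h ▸ hkK⟩]
  have hlogk : (2 * C + 3) * (√k * log (2 * k + 2)) ≤ δ / 2 * log n := by
    have hkK' : (k : ℝ) ≤ K := by exact_mod_cast hkK
    have hlog : 0 ≤ log (2 * k + 2 : ℝ) := log_nonneg (by linarith [(k.cast_nonneg : (0 : ℝ) ≤ k)])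
    exact le_trans (by gcongr) hK
  have hgrowth : ((k : ℝ) + 1) ^ (2 * C * k) * ((2 * k + 1) * (2 * k) ^ (2 * k))
      ≤ (n : ℝ) ^ (δ / 2 * √k) :=
    (add_one_rpow_mul_le_two_mul_add_two_rpow hC hk1).trans
      (rpow_mul_le_rpow_mul_sqrt (by positivity) hn0 k.cast_nonneg hlogk)
  calc _ ≤ (n : ℝ) ^ (-δ) * ((n : ℝ) ^ (-(δ / 2 * √k)) *
        ((k + 1) ^ (2 * C * k) * ((2 * k + 1) * (2 * k) ^ (2 * k)))) :=
        sum_sq_filter_card_eq_le hδ hk1 hn φ fun α hα => hφ α (hα ▸ hk1) (hα ▸ hkK)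
    _ ≤ (n : ℝ) ^ (-δ) * ((n : ℝ) ^ (-(δ / 2 * √k)) * (n : ℝ) ^ (δ / 2 * √k)) := by gcongr
    _ = _ := by rw [← rpow_add hn0, neg_add_cancel, rpow_zero, mul_one]

end

section

variable {D : ℕ → ℕ}

lemma eventually_sqrt_mul_log_log_le
    (hD : Tendsto (fun n => (D n : ℝ) * (log (log (n : ℝ)) / log (n : ℝ)) ^ 2) atTop (nhds 0))
    {ε : ℝ} (hε : 0 < ε) : ∀ᶠ n : ℕ in atTop, √(D n : ℝ) * log (log n) ≤ ε * log n := by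
  filter_upwards [hD.eventually (eventually_lt_nhds (by positivity : 0 < ε ^ 2)),
    (tendsto_log_atTop.comp tendsto_natCast_atTop_atTop).eventually_gt_atTop 0] with n hn hL
  rw [div_pow, ← mul_div_assoc, div_lt_iff₀ (by positivity)] at hn
  refine (lt_of_pow_lt_pow_left₀ 2 (by positivity) ?_).le
  rwa [mul_pow, mul_pow, sq_sqrt (Nat.cast_nonneg _)]

lemma eventually_le_log_sq
    (hD : Tendsto (fun n => (D n : ℝ) * (log (log (n : ℝ)) / log (n : ℝ)) ^ 2) atTop (nhds 0)) :
    ∀ᶠ n : ℕ in atTop, (D n : ℝ) ≤ log n ^ 2 := by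
  filter_upwards [eventually_sqrt_mul_log_log_le hD one_pos,
    ((tendsto_log_atTop.comp tendsto_log_atTop).comp
      tendsto_natCast_atTop_atTop).eventually_ge_atTop 1]
    with n hn hl
  have hsqrt : √(D n : ℝ) ≤ log n := by
    nlinarith [sqrt_nonneg (D n : ℝ), show log (log (n : ℝ)) ≥ 1 from hl]
  calc (D n : ℝ) = √(D n : ℝ) ^ 2 := (sq_sqrt (Nat.cast_nonneg _)).symm
    _ ≤ log n ^ 2 := pow_le_pow_left₀ (sqrt_nonneg _) hsqrt 2

lemma eventually_sqrt_mul_log_le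
    (hD : Tendsto (fun n => (D n : ℝ) * (log (log (n : ℝ)) / log (n : ℝ)) ^ 2) atTop (nhds 0))
    {c : ℝ} (hc : 0 < c) : ∀ᶠ n : ℕ in atTop, √(D n : ℝ) * log (2 * D n + 2) ≤ c * log n := by
  filter_upwards [eventually_sqrt_mul_log_log_le hD (by positivity : 0 < c / 3),
    eventually_le_log_sq hD,
    (tendsto_log_atTop.comp tendsto_natCast_atTop_atTop).eventually_ge_atTop 3] with n hn hDn hL
  have hL : (3 : ℝ) ≤ log n := hL
  have hlog : log (2 * D n + 2 : ℝ) ≤ 3 * log (log n) := by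
    calc log (2 * D n + 2 : ℝ) ≤ log (log n ^ 3) :=
          log_le_log (by positivity)
            (by nlinarith [mul_le_mul_of_nonneg_left hL (sq_nonneg (log n))])
      _ = 3 * log (log n) := by rw [log_pow]; norm_num
  calc √(D n : ℝ) * log (2 * D n + 2) ≤ √(D n : ℝ) * (3 * log (log n)) := by gcongr
    _ ≤ c * log n := by linarith

end

lemma tendsto_log_sq_mul_rpow_neg {δ : ℝ} (hδ : 0 < δ) :
    Tendsto (fun n : ℕ => log n ^ 2 * (n : ℝ) ^ (-δ)) atTop (nhds 0) := by
  have h : Tendsto (fun x : ℝ => log x ^ 2 * x ^ (-δ)) atTop (nhds 0) := by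
    refine ((isLittleO_log_rpow_rpow_atTop 2 hδ).tendsto_div_nhds_zero).congr' ?_
    filter_upwards [eventually_gt_atTop 0] with x hx
    rw [rpow_neg hx.le, rpow_two, div_eq_mul_inv]
  exact h.comp tendsto_natCast_atTop_atTop

/-- Fix constants `δ, C > 0` and a sequence `D(n)` of naturals with
`D(n)·(log log n / log n)² → 0`. If `|φ_n(α)| ≤ n^{−(1+δ)|V(α)|/2}·(|α|+1)^{C|α|}` for
every `α` with `1 ≤ |α| ≤ D(n)`, then `∑_{1 ≤ |α| ≤ D(n)} φ_n(α)² → 0` as `n → ∞`. -/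
theorem stmt15 (δ C : ℝ) (hδ : 0 < δ) (hC : 0 < C) (D : ℕ → ℕ)
    (hD : Filter.Tendsto
      (fun n => (D n : ℝ) * (Real.log (Real.log (n : ℝ)) / Real.log (n : ℝ)) ^ 2)
      Filter.atTop (nhds 0))
    (φ : (n : ℕ) → Finset (Edge n) → ℝ)
    (hφ : ∀ n : ℕ, ∀ α : Finset (Edge n), 1 ≤ α.card → α.card ≤ D n →
      |φ n α| ≤ (n : ℝ) ^ (-(1 + δ) * ((vertexSet α).card : ℝ) / 2) *
        ((α.card : ℝ) + 1) ^ (C * (α.card : ℝ))) :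
    Filter.Tendsto
      (fun n => ∑ α ∈ Finset.univ.filter
          (fun α : Finset (Edge n) => 1 ≤ α.card ∧ α.card ≤ D n), (φ n α) ^ 2)
      Filter.atTop (nhds 0) := by
  have hc : 0 < δ / 2 / (2 * C + 3) := by positivity
  refine squeeze_zero' (Eventually.of_forall fun n => sum_nonneg fun α _ => sq_nonneg _) ?_
    (tendsto_log_sq_mul_rpow_neg hδ)
  filter_upwards [eventually_ge_atTop 1, eventually_le_log_sq hD,
    eventually_sqrt_mul_log_le hD hc] with n hn hDn hK
  have hK' : (2 * C + 3) * (√(D n : ℝ) * log (2 * D n + 2)) ≤ δ / 2 * log n :=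
    (mul_le_mul_of_nonneg_left hK (by positivity)).trans_eq (by field_simp)
  calc _ ≤ D n * (n : ℝ) ^ (-δ) := sum_sq_filter_card_mem_Icc_le hδ.le hC.le hn hK' (φ n) (hφ n)
    _ ≤ _ := by gcongr
end

section
/- Let Q be a finitely supported probability distribution on ℝ^N, let R be a finite nonempty subset of ℝ^N, and let D be a natural number. Let F be the set of polynomials f : ℝ^N → ℝ of degree at most D with E_Q[f] = 0 and E_Q[f²] ≤ 1, and let 𝒫 be the set of probability distributions on ℝ^N supported on R. Then, as an identity in [0, +∞]: inf_{P ∈ 𝒫} sup_{f ∈ F} E_P[f] = sup_{f ∈ F} min_{X ∈ R} f(X). -/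
open Finset

/-!
Restricted to the finite set `R`, a distribution supported on `R` is a point `w` of the standard
simplex in `ℝ^R`, and `E_P[f] = w ⬝ᵥ f|_R`. The set `F` is convex (the degree and mean
constraints are linear, the second-moment constraint is a sublevel set of a convex function as
`Q ≥ 0`), hence so is its image in `ℝ^R`. Sion's minimax theorem for the bilinear pairing on the
compact convex simplex exchanges `inf` and `sup`, and the infimum of `w ↦ w ⬝ᵥ y` over the
simplex is attained at a vertex, where it equals `min_{X ∈ R} y X`.
-/

lemma Finset.inf'_eq_inf'_univ_subtype {α β : Type*} [SemilatticeInf β] (s : Finset α)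
    (hs : s.Nonempty) (g : α → β) :
    s.inf' hs g = univ.inf' (univ_nonempty_iff.2 hs.to_subtype) fun x : s => g x :=
  le_antisymm (le_inf' _ _ fun x _ => inf'_le _ x.2)
    (le_inf' _ _ fun x hx => inf'_le (fun x : s => g x) (mem_univ ⟨x, hx⟩))

lemma LinearMap.quasilinearOn_ofReal_comp {E : Type*} [AddCommGroup E] [Module ℝ E]
    (L : E →ₗ[ℝ] ℝ) {s : Set E} (hs : Convex ℝ s) :
    QuasilinearOn ℝ s fun x => ENNReal.ofReal (L x) :=
  ⟨(L.convexOn hs).quasiconvexOn.monotone_comp (g := ENNReal.ofReal) ENNReal.ofReal_mono,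
    (L.concaveOn hs).quasiconcaveOn.monotone_comp (g := ENNReal.ofReal) ENNReal.ofReal_mono⟩

section Simplex

variable {ι : Type*} [Fintype ι] [Nonempty ι]

lemma iInf_stdSimplex_ofReal_dotProduct (y : ι → ℝ) :
    ⨅ w ∈ stdSimplex ℝ ι, ENNReal.ofReal (w ⬝ᵥ y) =
      ENNReal.ofReal (univ.inf' univ_nonempty y) := by
  classical
  apply le_antisymm
  · obtain ⟨i, -, hi⟩ := exists_mem_eq_inf' univ_nonempty y
    refine (iInf₂_le _ (single_mem_stdSimplex ℝ i)).trans_eq ?_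
    rw [hi, single_one_dotProduct]
  · refine le_iInf₂ fun w hw => ENNReal.ofReal_le_ofReal ?_
    calc univ.inf' univ_nonempty y = ∑ i, w i * univ.inf' univ_nonempty y := by
          rw [← sum_mul, hw.2, one_mul]
      _ ≤ w ⬝ᵥ y := sum_le_sum fun i _ =>
          mul_le_mul_of_nonneg_left (inf'_le _ (mem_univ i)) (hw.1 i)

theorem iInf_stdSimplex_iSup_ofReal_dotProduct {C : Set (ι → ℝ)} (hC : Convex ℝ C) :
    ⨅ w ∈ stdSimplex ℝ ι, ⨆ y ∈ C, ENNReal.ofReal (w ⬝ᵥ y) =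
      ⨆ y ∈ C, ENNReal.ofReal (univ.inf' univ_nonempty y) := by
  classical
  simp_rw [← iInf_stdSimplex_ofReal_dotProduct]
  have hcont : Continuous fun p : (ι → ℝ) × (ι → ℝ) => ENNReal.ofReal (p.1 ⬝ᵥ p.2) :=
    ENNReal.continuous_ofReal.comp (by fun_prop)
  exact Sion.minimax' ⟨_, single_mem_stdSimplex ℝ (Classical.arbitrary ι)⟩
    (convex_stdSimplex ℝ ι) (isCompact_stdSimplex ℝ ι)
    (fun y _ => (hcont.comp (.prodMk_left y)).lowerSemicontinuous.lowerSemicontinuousOn _)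
    (fun y _ => (((dotProductBilin ℝ ℝ).flip y).quasilinearOn_ofReal_comp
      (convex_stdSimplex ℝ ι)).1)
    hC
    (fun w _ => (hcont.comp (.prodMk_right w)).upperSemicontinuous.upperSemicontinuousOn _)
    (fun w _ => ((dotProductBilin ℝ ℝ w).quasilinearOn_ofReal_comp hC).2)

end Simplex

section Distributions

variable {N : ℕ} {R : Finset (Fin N → ℝ)}

lemma fexp_eq_dotProduct {P : (Fin N → ℝ) →₀ ℝ} (hP : P.support ⊆ R)
    (g : (Fin N → ℝ) → ℝ) :
    fexp P g = (fun X : R => P X) ⬝ᵥ fun X : R => g X := by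
  rw [fexp, sum_subset hP fun x _ hx => by rw [Finsupp.notMem_support_iff.1 hx, zero_mul]]
  exact (sum_coe_sort R fun x => P x * g x).symm

lemma isDist_iff_of_support_subset {P : (Fin N → ℝ) →₀ ℝ} (hP : P.support ⊆ R) :
    IsDist P ↔ (fun X : R => P X) ∈ stdSimplex ℝ R := by
  have hsum : ∑ x ∈ P.support, P x = ∑ X : R, P X := by
    simpa [fexp, dotProduct] using fexp_eq_dotProduct hP 1
  rw [IsDist, hsum]
  refine and_congr_left' ⟨fun h X => h X, fun h x => ?_⟩
  by_cases hx : x ∈ P.support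
  · exact h ⟨x, hP hx⟩
  · rw [Finsupp.notMem_support_iff.1 hx]

lemma exists_isDist_of_mem_stdSimplex {w : R → ℝ} (hw : w ∈ stdSimplex ℝ R) :
    ∃ P : (Fin N → ℝ) →₀ ℝ,
      (IsDist P ∧ P.support ⊆ R) ∧ (fun X : R => P X) = w := by
  let P : (Fin N → ℝ) →₀ ℝ := Finsupp.indicator R fun x hx => w ⟨x, hx⟩
  have hPR : P.support ⊆ R := fun x hx => by
    exact_mod_cast Finsupp.support_indicator_subset R _ hx
  have hPw : (fun X : R => P X) = w := funext fun X => Finsupp.indicator_of_mem X.2 _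
  exact ⟨P, ⟨(isDist_iff_of_support_subset hPR).2 (hPw ▸ hw), hPR⟩, hPw⟩

lemma iInf_isDist_eq_iInf_stdSimplex {α : Type*} [CompleteLattice α] (G : (R → ℝ) → α) :
    ⨅ (P : (Fin N → ℝ) →₀ ℝ) (_ : IsDist P ∧ P.support ⊆ R), G (fun X : R => P X) =
      ⨅ w ∈ stdSimplex ℝ R, G w := by
  refine le_antisymm (le_iInf₂ fun w hw => ?_) (le_iInf₂ fun P hP => ?_)
  · obtain ⟨P, hP, rfl⟩ := exists_isDist_of_mem_stdSimplex hw
    exact iInf₂_le P hP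
  · exact iInf₂_le _ ((isDist_iff_of_support_subset hP.2).1 hP.1)

theorem iInf_iSup_ofReal_fexp_eq_iSup_ofReal_inf' (hR : R.Nonempty)
    {𝓕 : Set ((Fin N → ℝ) → ℝ)} (h𝓕 : Convex ℝ 𝓕) :
    ⨅ (P : (Fin N → ℝ) →₀ ℝ) (_ : IsDist P ∧ P.support ⊆ R), ⨆ g ∈ 𝓕,
      ENNReal.ofReal (fexp P g) = ⨆ g ∈ 𝓕, ENNReal.ofReal (R.inf' hR g) := by
  have : Nonempty R := hR.to_subtype
  let restrict : ((Fin N → ℝ) → ℝ) →ₗ[ℝ] (R → ℝ) :=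
    LinearMap.funLeft ℝ ℝ Subtype.val
  calc _ = ⨅ (P : (Fin N → ℝ) →₀ ℝ) (_ : IsDist P ∧ P.support ⊆ R), ⨆ g ∈ 𝓕,
          ENNReal.ofReal ((fun X : R => P X) ⬝ᵥ restrict g) :=
        iInf_congr fun P => iInf_congr fun hP => by simp_rw [fexp_eq_dotProduct hP.2]; rfl
    _ = ⨅ w ∈ stdSimplex ℝ R, ⨆ y ∈ restrict '' 𝓕, ENNReal.ofReal (w ⬝ᵥ y) := by
        simp_rw [iSup_image]
        exact iInf_isDist_eq_iInf_stdSimplex fun w =>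
          ⨆ g ∈ 𝓕, ENNReal.ofReal (w ⬝ᵥ restrict g)
    _ = ⨆ y ∈ restrict '' 𝓕, ENNReal.ofReal (univ.inf' univ_nonempty y) :=
        iInf_stdSimplex_iSup_ofReal_dotProduct (h𝓕.linear_image restrict)
    _ = _ := by
        simp_rw [iSup_image, R.inf'_eq_inf'_univ_subtype hR]
        rfl

end Distributions

section Polynomials

variable {N : ℕ}

noncomputable def MvPolynomial.evalLinearMap (σ R : Type*) [CommSemiring R] :
    MvPolynomial σ R →ₗ[R] ((σ → R) → R) where
  toFun f x := MvPolynomial.eval x f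
  map_add' f g := by ext x; simp
  map_smul' c f := by ext x; simp [MvPolynomial.smul_eval]

noncomputable def fexpLinearMap (P : (Fin N → ℝ) →₀ ℝ) :
    ((Fin N → ℝ) → ℝ) →ₗ[ℝ] ℝ where
  toFun := fexp P
  map_add' g h := by simp only [fexp, Pi.add_apply, mul_add, sum_add_distrib]
  map_smul' c g := by
    simp only [fexp, Pi.smul_apply, smul_eq_mul, mul_sum, RingHom.id_apply, mul_left_comm]

lemma convexOn_fexp_sq {P : (Fin N → ℝ) →₀ ℝ} (hP : ∀ x, 0 ≤ P x) :
    ConvexOn ℝ Set.univ fun g : (Fin N → ℝ) → ℝ => fexp P fun x => g x ^ 2 := by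
  refine ⟨convex_univ, fun g _ h _ a b ha hb hab => ?_⟩
  simp only [fexp, Pi.add_apply, Pi.smul_apply, smul_eq_mul, mul_sum, ← sum_add_distrib]
  refine sum_le_sum fun x _ => ?_
  have hsq := even_two.convexOn_pow.2 (Set.mem_univ (g x)) (Set.mem_univ (h x)) ha hb hab
  simp only [smul_eq_mul] at hsq
  nlinarith [hP x]

def lowDegreeTests (Q : (Fin N → ℝ) →₀ ℝ) (D : ℕ) : Set (MvPolynomial (Fin N) ℝ) :=
  {f | f.totalDegree ≤ D ∧ fexp Q (fun x => MvPolynomial.eval x f) = 0 ∧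
    fexp Q (fun x => (MvPolynomial.eval x f) ^ 2) ≤ 1}

lemma convex_lowDegreeTests {Q : (Fin N → ℝ) →₀ ℝ} (hQ : ∀ x, 0 ≤ Q x) (D : ℕ) :
    Convex ℝ (lowDegreeTests Q D) := by
  have hdeg : Convex ℝ {f : MvPolynomial (Fin N) ℝ | f.totalDegree ≤ D} := by
    rw [show {f : MvPolynomial (Fin N) ℝ | f.totalDegree ≤ D} =
        MvPolynomial.restrictTotalDegree (Fin N) ℝ D from
      Set.ext fun f => (MvPolynomial.mem_restrictTotalDegree _ _ f).symm]
    exact Submodule.convex _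
  have hmean := convex_hyperplane
    ((fexpLinearMap Q).comp (MvPolynomial.evalLinearMap (Fin N) ℝ)).isLinear 0
  have hvar := ((convexOn_fexp_sq hQ).comp_linearMap
    (MvPolynomial.evalLinearMap (Fin N) ℝ)).convex_le 1
  simp only [Set.preimage_univ, Set.sep_univ] at hvar
  exact hdeg.inter (hmean.inter hvar)

end Polynomials

/-- Let `Q` be a finitely supported distribution on `ℝ^N`, `R` a
finite nonempty subset of `ℝ^N`, and `D ∈ ℕ`. Let `F` be the set of polynomials of
degree at most `D` with `E_Q[f] = 0` and `E_Q[f²] ≤ 1`, and `𝒫` the set of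
distributions supported on `R`. Then, in `[0,∞]`:
`inf_{P ∈ 𝒫} sup_{f ∈ F} E_P[f] = sup_{f ∈ F} min_{X ∈ R} f(X)`. -/
theorem stmt18 (N D : ℕ) (Q : (Fin N → ℝ) →₀ ℝ) (hQ : IsDist Q)
    (R : Finset (Fin N → ℝ)) (hR : R.Nonempty) :
    (⨅ (P : (Fin N → ℝ) →₀ ℝ) (_ : IsDist P ∧ P.support ⊆ R),
      ⨆ (f : MvPolynomial (Fin N) ℝ) (_ : f.totalDegree ≤ D ∧
          fexp Q (fun x => MvPolynomial.eval x f) = 0 ∧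
          fexp Q (fun x => (MvPolynomial.eval x f) ^ 2) ≤ 1),
        ENNReal.ofReal (fexp P (fun x => MvPolynomial.eval x f))) =
    ⨆ (f : MvPolynomial (Fin N) ℝ) (_ : f.totalDegree ≤ D ∧
        fexp Q (fun x => MvPolynomial.eval x f) = 0 ∧
        fexp Q (fun x => (MvPolynomial.eval x f) ^ 2) ≤ 1),
      ENNReal.ofReal (R.inf' hR (fun X => MvPolynomial.eval X f)) := by
  have h := iInf_iSup_ofReal_fexp_eq_iSup_ofReal_inf' hR
    ((convex_lowDegreeTests hQ.1 D).linear_image (MvPolynomial.evalLinearMap (Fin N) ℝ))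
  simp only [iSup_image] at h
  exact h
end

section
/- Let 0 < ε ≤ 1/4 be real, let n ≥ 1 and q ≥ 1 be integers, set k = n/(q+1) (a positive real), and let m > 0 be a real number with m ≤ (1/4 − 2ε)·k. Let G be a simple graph on a vertex set V with |V| = n, and suppose V is partitioned into sets S₁, …, S_{q+1} such that: (a) each S_i is a clique in G; (b) (1−ε)·k ≤ |S_i| ≤ (1+ε)·k for every i; (c) for every i ≠ j and every vertex v ∈ S_i, v has at most (1/2 + 2ε)·k neighbors in S_j; and (d) there do not exist disjoint sets A, B ⊆ V with |A| ≥ m and |B| ≥ m such that every pair (a, b) ∈ A × B lies in two different parts S_i, S_j and a, b are adjacent in G. Then V cannot be partitioned into q sets each of which is a clique in G. -/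
open Finset

lemma aux_min_subset {α : Type*} [DecidableEq α] (s : Finset α) (f : α → ℝ) (m : ℝ)
    (hm : 0 < m) (hlt : ∀ x ∈ s, f x < m) (hsum : m ≤ ∑ x ∈ s, f x) :
    ∃ t ⊆ s, m ≤ ∑ x ∈ t, f x ∧ ∑ x ∈ t, f x < 2 * m := by
  classical
  set P := s.powerset.filter (fun t => m ≤ ∑ x ∈ t, f x) with hP
  have hne : P.Nonempty := ⟨s, by simp [hP, hsum]⟩
  obtain ⟨t, htP, htmin⟩ := P.exists_min_image Finset.card hne
  simp only [hP, Finset.mem_filter, Finset.mem_powerset] at htP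
  refine ⟨t, htP.1, htP.2, ?_⟩
  have htne : t.Nonempty := by
    rcases t.eq_empty_or_nonempty with h | h
    · exfalso; have := htP.2; rw [h] at this; simp at this; linarith
    · exact h
  obtain ⟨x, hx⟩ := htne
  have herase : ∑ y ∈ t.erase x, f y < m := by
    by_contra h
    push_neg at h
    have hmem : t.erase x ∈ P := by
      simp only [hP, Finset.mem_filter, Finset.mem_powerset]
      exact ⟨(Finset.erase_subset _ _).trans htP.1, h⟩
    have h1 := htmin _ hmem
    have h2 := Finset.card_erase_lt_of_mem hx
    omega
  have hadd := Finset.add_sum_erase t f hx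
  have hfx := hlt x (htP.1 hx)
  linarith

/-- Let `0 < ε ≤ 1/4`, `n, q ≥ 1`, `k = n/(q+1)`, and
`0 < m ≤ (1/4 − 2ε)k`. Suppose a graph `G` on `n` vertices has its vertex set
partitioned into cliques `S₁, …, S_{q+1}` such that each `|S_i| ∈ [(1−ε)k, (1+ε)k]`,
every vertex has at most `(1/2+2ε)k` neighbors in each other part, and there is no
pair of disjoint sets `A, B` of size at least `m` each such that every pair in
`A × B` lies in two different parts and is adjacent. Then the vertex set cannot be
partitioned into `q` cliques. -/
theorem stmt19 {V : Type*} [Fintype V] [DecidableEq V]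
    (ε : ℝ) (hε0 : 0 < ε) (hε : ε ≤ 1 / 4)
    (n q : ℕ) (hn : 1 ≤ n) (hq : 1 ≤ q) (hcard : Fintype.card V = n)
    (k : ℝ) (hk : k = (n : ℝ) / ((q : ℝ) + 1))
    (m : ℝ) (hm0 : 0 < m) (hm : m ≤ (1 / 4 - 2 * ε) * k)
    (G : SimpleGraph V) [DecidableRel G.Adj]
    (S : Fin (q + 1) → Finset V)
    (hSdisj : ∀ i j, i ≠ j → Disjoint (S i) (S j))
    (hScover : ∀ v, ∃ i, v ∈ S i)
    (hSclique : ∀ i, G.IsClique (S i : Set V))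
    (hSsize : ∀ i, (1 - ε) * k ≤ ((S i).card : ℝ) ∧ ((S i).card : ℝ) ≤ (1 + ε) * k)
    (hSdeg : ∀ i j, i ≠ j → ∀ v ∈ S i,
      (((S j).filter (fun u => G.Adj v u)).card : ℝ) ≤ (1 / 2 + 2 * ε) * k)
    (hbip : ¬ ∃ A B : Finset V, Disjoint A B ∧ m ≤ (A.card : ℝ) ∧ m ≤ (B.card : ℝ) ∧
      ∀ a ∈ A, ∀ b ∈ B, (∃ i j, i ≠ j ∧ a ∈ S i ∧ b ∈ S j) ∧ G.Adj a b) :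
    ¬ ∃ T : Fin q → Finset V, (∀ i j, i ≠ j → Disjoint (T i) (T j)) ∧
      (∀ v, ∃ i, v ∈ T i) ∧ ∀ i, G.IsClique (T i : Set V) := by
  classical
  rintro ⟨T, hTdisj, hTcover, hTclique⟩
  have hn0 : (0:ℝ) < n := by exact_mod_cast hn
  have hq0 : (0:ℝ) < (q:ℝ) + 1 := by positivity
  have hk0 : 0 < k := by rw [hk]; exact div_pos hn0 hq0
  have hε8 : 0 < 1/4 - 2*ε := by nlinarith
  -- each clique of size > (3/4)k is contained in a single part
  have key : ∀ t : Fin q, (3/4)*k < ((T t).card : ℝ) → ∃ i, T t ⊆ S i := by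
    intro t hbig
    by_contra hno
    push_neg at hno
    set C := T t with hC
    have hCclique : G.IsClique (C : Set V) := hTclique t
    -- decomposition of C into pieces
    have hCdecomp : C = Finset.univ.biUnion (fun i => C ∩ S i) := by
      ext v
      simp only [Finset.mem_biUnion, Finset.mem_univ, Finset.mem_inter, true_and]
      constructor
      · intro hv; obtain ⟨i, hi⟩ := hScover v; exact ⟨i, hv, hi⟩
      · rintro ⟨i, hv, _⟩; exact hv
    have hCsum : ((C.card : ℝ)) = ∑ i : Fin (q+1), ((C ∩ S i).card : ℝ) := by
      have := Finset.card_biUnion (s := (Finset.univ : Finset (Fin (q+1))))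
        (t := fun i => C ∩ S i) (fun i _ j _ hij =>
          Finset.disjoint_of_subset_left Finset.inter_subset_right
            (Finset.disjoint_of_subset_right Finset.inter_subset_right (hSdisj i j hij)))
      rw [← hCdecomp] at this
      rw [this]; push_cast; ring
    by_cases hcase : ∃ i, ((C \ S i).card : ℝ) < m
    · -- nearly all of C in part i, but C meets another part: degree bound
      obtain ⟨i, hi⟩ := hcase
      obtain ⟨b, hbC, hbS⟩ := Finset.not_subset.mp (hno i)
      obtain ⟨j, hbj⟩ := hScover b
      have hji : j ≠ i := by rintro rfl; exact hbS hbj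
      have hsub : C ∩ S i ⊆ (S i).filter (fun u => G.Adj b u) := by
        intro u hu
        rw [Finset.mem_inter] at hu
        rw [Finset.mem_filter]
        refine ⟨hu.2, hCclique hbC hu.1 ?_⟩
        rintro rfl; exact hbS hu.2
      have hdeg := hSdeg j i hji b hbj
      have h1 : ((C ∩ S i).card : ℝ) ≤ (1/2 + 2*ε) * k := by
        calc ((C ∩ S i).card : ℝ) ≤ _ := by exact_mod_cast Finset.card_le_card hsub
        _ ≤ _ := hdeg
      have h2 : (C ∩ S i).card + (C \ S i).card = C.card :=
        Finset.card_inter_add_card_sdiff C (S i)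
      have h2' : ((C ∩ S i).card : ℝ) + ((C \ S i).card : ℝ) = (C.card : ℝ) := by
        exact_mod_cast h2
      nlinarith
    · push_neg at hcase
      by_cases hcase2 : ∃ i, m ≤ ((C ∩ S i).card : ℝ)
      · -- two big cross-adjacent sets: contradiction with hbip
        obtain ⟨i, hi⟩ := hcase2
        refine hbip ⟨C ∩ S i, C \ S i, ?_, hi, hcase i, ?_⟩
        · exact Finset.disjoint_of_subset_left Finset.inter_subset_right
            Finset.disjoint_sdiff
        · intro a ha b hb
          rw [Finset.mem_inter] at ha
          rw [Finset.mem_sdiff] at hb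
          obtain ⟨j, hbj⟩ := hScover b
          have hji : i ≠ j := by rintro rfl; exact hb.2 hbj
          have hab : a ≠ b := by rintro rfl; exact hb.2 ha.2
          exact ⟨⟨i, j, hji, ha.2, hbj⟩, hCclique ha.1 hb.1 hab⟩
      · -- all pieces small: split into two halves of size ≥ m each
        push_neg at hcase2
        have h3m : (3:ℝ) * m ≤ (3/4) * k := by nlinarith
        have hsumge : m ≤ ∑ i : Fin (q+1), ((C ∩ S i).card : ℝ) := by
          rw [← hCsum]; linarith
        obtain ⟨I, _, hI1, hI2⟩ := aux_min_subset Finset.univ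
          (fun i => ((C ∩ S i).card : ℝ)) m hm0 (fun x _ => hcase2 x) hsumge
        set A := C.filter (fun v => ∃ i ∈ I, v ∈ S i) with hA
        have hAcard : ((A.card : ℝ)) = ∑ i ∈ I, ((C ∩ S i).card : ℝ) := by
          have hAeq : A = I.biUnion (fun i => C ∩ S i) := by
            ext v
            simp only [hA, Finset.mem_filter, Finset.mem_biUnion, Finset.mem_inter]
            constructor
            · rintro ⟨hv, i, hiI, hvi⟩; exact ⟨i, hiI, hv, hvi⟩
            · rintro ⟨i, hiI, hv, hvi⟩; exact ⟨hv, i, hiI, hvi⟩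
          rw [hAeq, Finset.card_biUnion (fun i _ j _ hij =>
            Finset.disjoint_of_subset_left Finset.inter_subset_right
              (Finset.disjoint_of_subset_right Finset.inter_subset_right (hSdisj i j hij)))]
          push_cast; ring
        have hAsub : A ⊆ C := Finset.filter_subset _ _
        have hBcard : ((C \ A).card : ℝ) = (C.card : ℝ) - (A.card : ℝ) := by
          rw [Finset.card_sdiff_of_subset hAsub]
          have := Finset.card_le_card hAsub
          push_cast [Nat.cast_sub this]
          ring
        refine hbip ⟨A, C \ A, Finset.disjoint_sdiff, by rw [hAcard]; exact hI1, ?_, ?_⟩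
        · rw [hBcard, hAcard]; linarith
        · intro a ha b hb
          rw [Finset.mem_sdiff] at hb
          have haC := hAsub ha
          rw [hA, Finset.mem_filter] at ha
          obtain ⟨_, i, hiI, hai⟩ := ha
          obtain ⟨j, hbj⟩ := hScover b
          have hji : i ≠ j := by
            rintro rfl
            exact hb.2 (by rw [hA, Finset.mem_filter]; exact ⟨hb.1, i, hiI, hbj⟩)
          have hab : a ≠ b := by rintro rfl; exact hb.2 (Finset.mem_filter.mpr ⟨hb.1, i, hiI, hai⟩)
          exact ⟨⟨i, j, hji, hai, hbj⟩, hCclique haC hb.1 hab⟩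
  -- final counting
  set W : Finset (Fin q) := Finset.univ.filter (fun t => (3/4)*k < ((T t).card : ℝ)) with hW
  have hpex : ∀ t : Fin q, ∃ i : Fin (q+1), t ∈ W → T t ⊆ S i := by
    intro t
    by_cases ht : t ∈ W
    · obtain ⟨i, hi⟩ := key t (by simpa [hW] using ht)
      exact ⟨i, fun _ => hi⟩
    · exact ⟨0, fun h => absurd h ht⟩
  choose p hp using hpex
  have hinj : Set.InjOn p ↑W := by
    intro t₁ h₁ t₂ h₂ hpe
    by_contra hne
    have hd := hTdisj t₁ t₂ hne
    have hsub : T t₁ ∪ T t₂ ⊆ S (p t₁) := by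
      refine Finset.union_subset (hp t₁ h₁) ?_
      rw [hpe]; exact hp t₂ h₂
    have hcards : (T t₁).card + (T t₂).card ≤ (S (p t₁)).card := by
      rw [← Finset.card_union_of_disjoint hd]
      exact Finset.card_le_card hsub
    have hc1 : (3/4)*k < ((T t₁).card : ℝ) := by
      have := h₁; rw [Finset.mem_coe, hW, Finset.mem_filter] at this; exact this.2
    have hc2 : (3/4)*k < ((T t₂).card : ℝ) := by
      have := h₂; rw [Finset.mem_coe, hW, Finset.mem_filter] at this; exact this.2
    have hS1 := (hSsize (p t₁)).2
    have hcards' : ((T t₁).card : ℝ) + ((T t₂).card : ℝ) ≤ ((S (p t₁)).card : ℝ) := by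
      exact_mod_cast hcards
    nlinarith
  set P : Finset (Fin (q+1)) := W.image p with hPdef
  have hPcard : P.card = W.card := Finset.card_image_of_injOn hinj
  have hWq : W.card ≤ q := by
    have h := Finset.card_le_card (Finset.subset_univ W)
    simpa using h
  -- vertices in parts outside P are covered by cliques outside W
  have hcover2 : (Finset.univ \ P).biUnion S ⊆ (Finset.univ \ W).biUnion T := by
    intro v hv
    rw [Finset.mem_biUnion] at hv
    obtain ⟨i, hi, hvi⟩ := hv
    rw [Finset.mem_sdiff] at hi
    obtain ⟨t, hvt⟩ := hTcover v
    rw [Finset.mem_biUnion]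
    refine ⟨t, ?_, hvt⟩
    rw [Finset.mem_sdiff]
    refine ⟨Finset.mem_univ t, fun htW => ?_⟩
    have hvp : v ∈ S (p t) := hp t htW hvt
    have : i = p t := by
      by_contra hip
      exact Finset.disjoint_left.mp (hSdisj i (p t) hip) hvi hvp
    exact hi.2 (this ▸ Finset.mem_image_of_mem p htW)
  have hdisjS : ∀ i ∈ Finset.univ \ P, ∀ j ∈ Finset.univ \ P, i ≠ j → Disjoint (S i) (S j) :=
    fun i _ j _ hij => hSdisj i j hij
  have hdisjT : ∀ i ∈ Finset.univ \ W, ∀ j ∈ Finset.univ \ W, i ≠ j → Disjoint (T i) (T j) :=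
    fun i _ j _ hij => hTdisj i j hij
  have hsumle : ∑ i ∈ Finset.univ \ P, ((S i).card : ℝ) ≤ ∑ t ∈ Finset.univ \ W, ((T t).card : ℝ) := by
    have h1 : ((Finset.univ \ P).biUnion S).card ≤ ((Finset.univ \ W).biUnion T).card :=
      Finset.card_le_card hcover2
    rw [Finset.card_biUnion hdisjS, Finset.card_biUnion hdisjT] at h1
    exact_mod_cast h1
  -- lower bound on the left
  have hcardP : (Finset.univ \ P).card = (q + 1) - W.card := by
    rw [Finset.card_sdiff_of_subset (Finset.subset_univ P)]
    simp [hPcard]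
  have hcardW : (Finset.univ \ W).card = q - W.card := by
    rw [Finset.card_sdiff_of_subset (Finset.subset_univ W)]
    simp
  have hlow : ((q:ℝ) + 1 - W.card) * ((1 - ε) * k) ≤ ∑ i ∈ Finset.univ \ P, ((S i).card : ℝ) := by
    have h := Finset.sum_le_sum (s := Finset.univ \ P)
      (f := fun _ => (1 - ε) * k) (g := fun i => ((S i).card : ℝ)) (fun i _ => (hSsize i).1)
    rw [Finset.sum_const, nsmul_eq_mul, hcardP] at h
    have hc : ((q + 1 - W.card : ℕ) : ℝ) = (q:ℝ) + 1 - W.card := by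
      have hle : W.card ≤ q + 1 := le_trans hWq (Nat.le_succ q)
      push_cast [Nat.cast_sub hle]; ring
    rw [hc] at h
    exact h
  have hhigh : ∑ t ∈ Finset.univ \ W, ((T t).card : ℝ) ≤ ((q:ℝ) - W.card) * ((3/4) * k) := by
    have hbound : ∀ t ∈ Finset.univ \ W, ((T t).card : ℝ) ≤ (3/4) * k := by
      intro t ht
      rw [Finset.mem_sdiff] at ht
      have := ht.2
      rw [hW, Finset.mem_filter] at this
      push_neg at this
      exact this (Finset.mem_univ t)
    calc ∑ t ∈ Finset.univ \ W, ((T t).card : ℝ) ≤ ∑ _t ∈ Finset.univ \ W, (3/4) * k :=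
          Finset.sum_le_sum hbound
      _ = ((Finset.univ \ W).card : ℝ) * ((3/4) * k) := by rw [Finset.sum_const, nsmul_eq_mul]
      _ = ((q:ℝ) - W.card) * ((3/4) * k) := by
          rw [hcardW]
          have : ((q - W.card : ℕ) : ℝ) = (q:ℝ) - W.card := by
            push_cast [Nat.cast_sub hWq]; ring
          rw [this]
  have hWcast : (W.card : ℝ) ≤ (q : ℝ) := by exact_mod_cast hWq
  nlinarith [hlow, hhigh, hsumle, hk0, hε, hWcast]
end
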